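/- arXiv:2107.10694 — 8 statements merged into one kernel-verified Lean document; each statement's English description precedes it below -/
import Mathlib

section
/- Let $a : \mathbb{N} \to \mathbb{C}$ be a square-summable sequence with $a_n \neq a_{n+1}$ for all $n$. If $x \in \ell^2(\mathbb{N})$ satisfies $a_n \sum_{k=0}^n x_k + \sum_{k=n+1}^\infty a_k x_k = 0$ for all $n \in \mathbb{N}$, then $x = 0$. (In particular, the $L$-matrix operator with parameter sequence $a$ is injective.) -/
/-- For a square-summable parameter sequence `a` with `a n ≠ a (n+1)`
for all `n` (regularity), any `x ∈ ℓ²` satisfying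
`a n * ∑_{k=0}^n x k + ∑_{k>n} a k * x k = 0` for all `n` must be zero. -/
theorem regular_L_matrix_injective (a x : ℕ → ℂ)
    (ha : Summable fun n => ‖a n‖ ^ 2)
    (hreg : ∀ n : ℕ, a n ≠ a (n + 1))
    (hx : Summable fun n => ‖x n‖ ^ 2)
    (heq : ∀ n : ℕ,
      a n * (∑ k ∈ Finset.range (n + 1), x k)
        + (∑' k : ℕ, a (n + 1 + k) * x (n + 1 + k)) = 0) :
    x = 0 := by
  -- a n * x n is summable by AM-GM
  have hf : Summable (fun n => a n * x n) := by
    apply Summable.of_norm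
    apply Summable.of_nonneg_of_le (fun n => norm_nonneg _) (fun n => ?_)
      ((ha.add hx).div_const 2)
    rw [norm_mul]
    nlinarith [norm_nonneg (a n), norm_nonneg (x n), sq_nonneg (‖a n‖ - ‖x n‖)]
  -- the tail sums telescope
  have hshift : ∀ m : ℕ, (∑' k : ℕ, a (m + 1 + k) * x (m + 1 + k))
      = a (m + 1) * x (m + 1) + ∑' k : ℕ, a (m + 1 + 1 + k) * x (m + 1 + 1 + k) := by
    intro m
    have hs : Summable (fun k => a (m + 1 + k) * x (m + 1 + k)) := by
      have := (summable_nat_add_iff (f := fun n => a n * x n) (m + 1)).mpr hf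
      simpa [add_comm] using this
    have h0 := Summable.tsum_eq_zero_add hs
    simp only [add_zero] at h0
    rw [h0]
    congr 1
    exact tsum_congr fun k => by rw [show m + 1 + (k + 1) = m + 1 + 1 + k by omega]
  -- all partial sums vanish
  have hS : ∀ n : ℕ, (∑ k ∈ Finset.range (n + 1), x k) = 0 := by
    intro n
    have h1 := heq n
    have h2 := heq (n + 1)
    rw [Finset.sum_range_succ] at h2
    rw [hshift n] at h1
    have hdiff : (a n - a (n + 1)) * (∑ k ∈ Finset.range (n + 1), x k) = 0 := by
      have h3 := sub_eq_zero.mpr (h1.trans h2.symm)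
      ring_nf at h3 ⊢
      linear_combination h3
    rcases mul_eq_zero.mp hdiff with h | h
    · exact absurd (sub_eq_zero.mp h) (hreg n)
    · exact h
  -- conclude x = 0
  funext n
  cases n with
  | zero =>
      have := hS 0
      simpa using this
  | succ n =>
      have h1 := hS n
      have h2 := hS (n + 1)
      rw [Finset.sum_range_succ, h1, zero_add] at h2
      simpa using h2
end

section
/- Let $a : \mathbb{N} \to \mathbb{C}$ satisfy $a_n \neq a_{n+1}$ for all $n$, and set $b_n = 1/(a_n - a_{n+1})$. Let $\mathcal{J}$ be the tridiagonal (Jacobi) matrix with diagonal entries $\mathcal{J}_{0,0} = b_0$, $\mathcal{J}_{n,n} = b_{n-1} + b_n$ for $n \geq 1$, and off-diagonal entries $\mathcal{J}_{n,n+1} = \mathcal{J}_{n+1,n} = -b_n$. Then for the $L$-matrix $\mathcal{L}$ with entries $a_{\max(m,n)}$, the formal matrix products satisfy $\mathcal{L} \cdot \mathcal{J} = \mathcal{J} \cdot \mathcal{L} = \mathcal{I}$, i.e., $\sum_k a_{\max(m,k)} \mathcal{J}_{k,n} = \delta_{m,n}$ for all $m,n$. -/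
private lemma key_sum (a : ℕ → ℂ)
    (hreg : ∀ n : ℕ, a n ≠ a (n + 1))
    (b : ℕ → ℂ) (hb : ∀ n : ℕ, b n = 1 / (a n - a (n + 1)))
    (J : ℕ → ℕ → ℂ)
    (hJ : ∀ k l : ℕ, J k l =
      if k = l then (if k = 0 then b 0 else b (k - 1) + b k)
      else if l = k + 1 then -b k
      else if k = l + 1 then -b l
      else 0) (m n : ℕ) :
    (∑' k : ℕ, a (max m k) * J k n) = (if m = n then (1 : ℂ) else 0) := by
  have hne : ∀ k, a k - a (k + 1) ≠ 0 := fun k => sub_ne_zero.mpr (hreg k)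
  rcases n with _ | n'
  · rw [tsum_eq_sum (s := ({0, 1} : Finset ℕ))
      (by
        intro k hk
        simp only [Finset.mem_insert, Finset.mem_singleton] at hk
        push_neg at hk
        rw [hJ, if_neg (by omega), if_neg (by omega), if_neg (by omega), mul_zero])]
    rw [Finset.sum_pair (by norm_num)]
    rw [hJ 0 0, hJ 1 0, if_pos rfl, if_pos rfl, if_neg (by omega), if_neg (by omega),
      if_pos rfl]
    rcases m with _ | m'
    · rw [if_pos rfl]
      simp only [Nat.max_self, Nat.max_eq_right (by omega : (0:ℕ) ≤ 1), hb]
      field_simp [hne 0]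
      ring
    · rw [if_neg (by omega), Nat.max_eq_left (by omega : (0:ℕ) ≤ m' + 1),
        Nat.max_eq_left (by omega : (1:ℕ) ≤ m' + 1)]
      ring
  · rw [tsum_eq_sum (s := ({n', n' + 1, n' + 2} : Finset ℕ))
      (by
        intro k hk
        simp only [Finset.mem_insert, Finset.mem_singleton] at hk
        push_neg at hk
        rw [hJ, if_neg (by omega), if_neg (by omega), if_neg (by omega), mul_zero])]
    rw [Finset.sum_insert (by simp only [Finset.mem_insert, Finset.mem_singleton]; omega),
      Finset.sum_insert (by simp only [Finset.mem_singleton]; omega),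
      Finset.sum_singleton]
    rw [hJ n' (n' + 1), hJ (n' + 1) (n' + 1), hJ (n' + 2) (n' + 1)]
    rw [if_neg (by omega), if_pos rfl, if_pos rfl, if_neg (by omega),
      if_neg (by omega), if_neg (by omega), if_pos rfl]
    simp only [Nat.add_sub_cancel]
    rcases Nat.lt_trichotomy m (n' + 1) with hm | hm | hm
    · rw [if_neg (by omega), Nat.max_eq_right (by omega : m ≤ n'),
        Nat.max_eq_right (by omega : m ≤ n' + 1), Nat.max_eq_right (by omega : m ≤ n' + 2)]
      rw [hb, hb]
      field_simp [hne n', hne (n' + 1)]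
      ring
    · rw [if_pos hm, hm, Nat.max_eq_left (by omega : n' ≤ n' + 1),
        Nat.max_self, Nat.max_eq_right (by omega : n' + 1 ≤ n' + 2)]
      rw [hb, hb]
      field_simp [hne n', hne (n' + 1)]
      ring
    · rw [if_neg (by omega), Nat.max_eq_left (by omega : n' ≤ m),
        Nat.max_eq_left (by omega : n' + 1 ≤ m), Nat.max_eq_left (by omega : n' + 2 ≤ m)]
      ring

/-- For a regular parameter sequence `a` with `b n = 1/(a n - a (n+1))`,
the Jacobi matrix `J` (diagonal `b 0, b 0 + b 1, …`, off-diagonals `-b n`) is a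
two-sided formal inverse of the `L`-matrix `(m, k) ↦ a (max m k)`. The sums have
only finitely many nonzero terms, and are expressed via `tsum`. -/
theorem L_matrix_mul_jacobi_inverse (a : ℕ → ℂ)
    (hreg : ∀ n : ℕ, a n ≠ a (n + 1))
    (b : ℕ → ℂ) (hb : ∀ n : ℕ, b n = 1 / (a n - a (n + 1)))
    (J : ℕ → ℕ → ℂ)
    (hJ : ∀ k l : ℕ, J k l =
      if k = l then (if k = 0 then b 0 else b (k - 1) + b k)
      else if l = k + 1 then -b k
      else if k = l + 1 then -b l
      else 0) :
    ∀ m n : ℕ,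
      (∑' k : ℕ, a (max m k) * J k n) = (if m = n then (1 : ℂ) else 0) ∧
      (∑' k : ℕ, J m k * a (max k n)) = (if m = n then (1 : ℂ) else 0) := by
  have hsymm : ∀ k l, J k l = J l k := by
    intro k l
    by_cases h1 : k = l
    · subst h1; rfl
    · rw [hJ k l, hJ l k, if_neg h1, if_neg (Ne.symm h1)]
      by_cases h2 : l = k + 1
      · rw [if_pos h2, if_neg (by omega), if_pos h2]
      · rw [if_neg h2]
        by_cases h3 : k = l + 1
        · rw [if_pos h3, if_pos h3]
        · rw [if_neg h3, if_neg h3, if_neg h2]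
  intro m n
  constructor
  · exact key_sum a hreg b hb J hJ m n
  · have : (∑' k : ℕ, J m k * a (max k n)) = ∑' k : ℕ, a (max n k) * J k m := by
      apply tsum_congr
      intro k
      rw [hsymm m k, max_comm, mul_comm]
    rw [this, key_sum a hreg b hb J hJ n m]
    by_cases h : m = n
    · rw [if_pos h, if_pos h.symm]
    · rw [if_neg h, if_neg (Ne.symm h)]
end

section
/- Let $L_n$ be the $n \times n$ matrix with entries $(L_n)_{i,j} = a_{\max(i,j)}$ for a complex sequence $a$. Then $\det L_n = a_{n-1} \prod_{j=1}^{n-1}(a_{j-1} - a_j)$. -/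
/-- The determinant of the `n × n` section of the `L`-matrix with
parameter sequence `a` equals `a (n-1) * ∏_{j=1}^{n-1} (a (j-1) - a j)`. -/
theorem det_L_matrix_section (a : ℕ → ℂ) (n : ℕ) (hn : 1 ≤ n) :
    (Matrix.of fun i j : Fin n => a (max i.val j.val)).det
      = a (n - 1) * ∏ j ∈ Finset.range (n - 1), (a j - a (j + 1)) := by
  induction n generalizing a with
  | zero => omega
  | succ m ih =>
    match m with
    | 0 => simp [Matrix.det_fin_one]
    | k + 1 =>
      set M : Matrix (Fin (k+2)) (Fin (k+2)) ℂ :=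
        Matrix.of fun i j : Fin (k+2) => a (max i.val j.val) with hM
      set M' : Matrix (Fin (k+2)) (Fin (k+2)) ℂ :=
        M.updateRow 0 (M 0 + (-1 : ℂ) • M 1) with hM'
      have hdet : M'.det = M.det :=
        Matrix.det_updateRow_add_smul_self M (Fin.zero_ne_one) (-1)
      have hzero : ∀ j : Fin (k+2), j ≠ 0 → M' 0 j = 0 := by
        intro j hj
        have hj1 : 1 ≤ j.val := by
          rcases Nat.eq_zero_or_pos j.val with h | h
          · exact absurd (Fin.ext h) hj
          · exact h
        simp only [hM', Matrix.updateRow_self, hM, Pi.add_apply, Pi.smul_apply,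
          Matrix.of_apply]
        have h0 : max (0:ℕ) j.val = j.val := by omega
        have h1 : max 1 j.val = j.val := by omega
        simp only [Fin.val_zero, Fin.val_one, h0, h1, smul_eq_mul]
        ring
      have hexp := Matrix.det_succ_row_zero M'
      rw [Finset.sum_eq_single (0 : Fin (k+2))] at hexp
      · have h00 : M' 0 0 = a 0 - a 1 := by
          simp only [hM', Matrix.updateRow_self, hM, Pi.add_apply, Pi.smul_apply,
            Matrix.of_apply, Fin.val_zero, Fin.val_one, smul_eq_mul]
          norm_num
          ring
        have hsub : M'.submatrix Fin.succ (Fin.succAbove 0) =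
            Matrix.of fun i j : Fin (k+1) => (fun t => a (t+1)) (max i.val j.val) := by
          ext i j
          simp only [Matrix.submatrix_apply, Fin.zero_succAbove, hM',
            Matrix.updateRow_ne (Fin.succ_ne_zero i), hM, Matrix.of_apply,
            Fin.val_succ]
          congr 1
          omega
        rw [h00, hsub, ih (fun t => a (t+1)) (by omega)] at hexp
        rw [← hdet, hexp]
        simp only [Nat.add_sub_cancel]
        rw [Finset.prod_range_succ']
        simp only [Fin.val_zero, pow_zero]
        ring
      · intro j _ hj
        rw [hzero j hj]
        ring
      · intro h
        exact absurd (Finset.mem_univ _) h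
end

section
/- Let $a$ be a complex sequence with $a_n \neq a_{n+1}$ for all $n$ and $a_{n-1} \neq 0$, set $b_k = 1/(a_k - a_{k+1})$, and let $L_n$, $J_n$ be the $n \times n$ sections of the $L$-matrix and associated Jacobi matrix respectively. Then $L_n^{-1} = J_n - \frac{a_n b_{n-1}}{a_{n-1}} e_{n-1} e_{n-1}^T$, where $e_{n-1} = (0,\dots,0,1)^T \in \mathbb{C}^n$. -/
lemma sum_nbhd {n : ℕ} (f : Fin n → ℂ) (i : Fin n) (g : ℕ → ℂ)
    (hg : ∀ (k : ℕ) (h : k < n), g k = f ⟨k, h⟩) (hg0 : ∀ k, n ≤ k → g k = 0)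
    (hf : ∀ k : Fin n, k.val + 1 ≠ i.val → k.val ≠ i.val → k.val ≠ i.val + 1 → f k = 0) :
    ∑ k, f k = (if i.val = 0 then 0 else g (i.val - 1)) + g i.val + g (i.val + 1) := by
  have hgz : ∀ k, k ∉ ({i.val - 1, i.val, i.val + 1} : Finset ℕ) → g k = 0 := by
    intro k hk
    simp only [Finset.mem_insert, Finset.mem_singleton] at hk
    push_neg at hk
    obtain ⟨hk1, hk2, hk3⟩ := hk
    by_cases h : k < n
    · rw [hg k h]
      exact hf ⟨k, h⟩ (show k + 1 ≠ i.val by omega) (show k ≠ i.val by omega)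
        (show k ≠ i.val + 1 by omega)
    · exact hg0 k (by omega)
  have h1 : ∑ k, f k = ∑ k ∈ Finset.range n, g k := by
    rw [← Fin.sum_univ_eq_sum_range g n]
    exact Finset.sum_congr rfl fun k _ => (hg k.val k.isLt).symm
  set t : Finset ℕ := {i.val - 1, i.val, i.val + 1} with ht
  have e1 : ∑ k ∈ Finset.range n ∩ t, g k = ∑ k ∈ Finset.range n, g k := by
    apply Finset.sum_subset Finset.inter_subset_left
    intro x hx hx'
    exact hgz x (fun hxt => hx' (Finset.mem_inter.mpr ⟨hx, hxt⟩))
  have e2 : ∑ k ∈ Finset.range n ∩ t, g k = ∑ k ∈ t, g k := by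
    apply Finset.sum_subset Finset.inter_subset_right
    intro x hx hx'
    apply hg0
    by_contra h
    exact hx' (Finset.mem_inter.mpr ⟨Finset.mem_range.mpr (by omega), hx⟩)
  rw [h1, ← e1, e2]
  by_cases hi : i.val = 0
  · rw [ht, hi]
    norm_num
  · have hm1 : i.val - 1 ∉ ({i.val, i.val + 1} : Finset ℕ) := by simp; omega
    have hm2 : i.val ∉ ({i.val + 1} : Finset ℕ) := by simp
    rw [ht, Finset.sum_insert hm1, Finset.sum_insert hm2, Finset.sum_singleton, if_neg hi]
    ring

/-- For a regular sequence `a` with `a (n-1) ≠ 0`, the inverse of the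
`n × n` section `L` of the `L`-matrix is `J - (a n * b (n-1) / a (n-1)) • E`, where
`J` is the `n × n` Jacobi section and `E = e_{n-1} e_{n-1}ᵀ` is the matrix with a
single `1` in the bottom-right corner. -/
theorem L_section_inverse (a : ℕ → ℂ) (n : ℕ) (hn : 1 ≤ n)
    (hreg : ∀ m : ℕ, a m ≠ a (m + 1)) (ha : a (n - 1) ≠ 0)
    (b : ℕ → ℂ) (hb : ∀ m : ℕ, b m = 1 / (a m - a (m + 1)))
    (L J : Matrix (Fin n) (Fin n) ℂ)
    (hL : ∀ i j : Fin n, L i j = a (max i.val j.val))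
    (hJ : ∀ i j : Fin n, J i j =
      if i = j then (if i.val = 0 then b 0 else b (i.val - 1) + b i.val)
      else if j.val = i.val + 1 then -b i.val
      else if i.val = j.val + 1 then -b j.val
      else 0) :
    L⁻¹ = J - (a n * b (n - 1) / a (n - 1)) •
      Matrix.single (⟨n - 1, by omega⟩ : Fin n) (⟨n - 1, by omega⟩ : Fin n) 1 := by
  have hb' : ∀ m, b m * (a m - a (m + 1)) = 1 := fun m => by
    rw [hb m, one_div]
    exact inv_mul_cancel₀ (sub_ne_zero.mpr (hreg m))
  set c : ℂ := a n * b (n - 1) / a (n - 1) with hcdef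
  set E : Matrix (Fin n) (Fin n) ℂ :=
    Matrix.single (⟨n - 1, by omega⟩ : Fin n) (⟨n - 1, by omega⟩ : Fin n) 1 with hEdef
  have hE : ∀ p q : Fin n, E p q = if p.val = n - 1 ∧ q.val = n - 1 then 1 else 0 := by
    intro p q
    rw [hEdef]
    simp [Matrix.single, Fin.ext_iff, eq_comm]
  have hM : ∀ p q : Fin n, (J - c • E) p q =
      J p q - (if p.val = n - 1 ∧ q.val = n - 1 then c else 0) := by
    intro p q
    rw [Matrix.sub_apply, Matrix.smul_apply, hE]
    split_ifs <;> simp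
  apply Matrix.inv_eq_left_inv
  ext i j
  rw [Matrix.mul_apply, Matrix.one_apply]
  set g : ℕ → ℂ := fun k =>
    if h : k < n then (J - c • E) i ⟨k, h⟩ * L ⟨k, h⟩ j else 0 with hgdef
  rw [sum_nbhd (fun k => (J - c • E) i k * L k j) i g
    (fun k h => by simp [hgdef, dif_pos h])
    (fun k h => by simp [hgdef]; omega)
    ?_]
  · have hg0 : ∀ k, n ≤ k → g k = 0 := by
      intro k hk
      simp only [hgdef]
      rw [dif_neg (by omega)]
    have hgval : ∀ (k : ℕ) (h : k < n),
        g k = (J i ⟨k, h⟩ - if i.val = n - 1 ∧ k = n - 1 then c else 0) * a (max k j.val) := by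
      intro k h
      simp only [hgdef]
      rw [dif_pos h, hM, hL]
    by_cases hi0 : i.val = 0
    · by_cases hn1 : n = 1
      · have hj0 : j.val = 0 := by omega
        rw [if_pos hi0, hgval i.val i.isLt, hg0 (i.val + 1) (by omega)]
        have eJ : J i ⟨i.val, i.isLt⟩ = b 0 := by
          rw [hJ]
          simp only [Fin.ext_iff, Fin.val_mk]
          split_ifs <;> first | rfl | omega
        rw [eJ, if_pos ⟨by omega, by omega⟩, show max i.val j.val = 0 by omega,
          if_pos (Fin.ext (show i.val = j.val by omega))]
        have ha0 : a 0 ≠ 0 := by rw [show (0:ℕ) = n - 1 by omega]; exact ha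
        have hcm0 : c * a 0 = a 1 * b 0 := by
          rw [hcdef, show n - 1 = 0 by omega, hn1]
          exact div_mul_cancel₀ _ ha0
        linear_combination hb' 0 - hcm0
      · have h2n : 2 ≤ n := by omega
        rw [if_pos hi0, hgval i.val i.isLt, hgval (i.val + 1) (by omega)]
        have eJ1 : J i ⟨i.val, i.isLt⟩ = b 0 := by
          rw [hJ]
          simp only [Fin.ext_iff, Fin.val_mk]
          split_ifs <;> first | rfl | omega
        have eJ2 : J i ⟨i.val + 1, by omega⟩ = -b i.val := by
          rw [hJ]
          simp only [Fin.ext_iff, Fin.val_mk]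
          split_ifs <;> first | rfl | omega
        rw [eJ1, eJ2, if_neg (show ¬(i.val = n - 1 ∧ i.val = n - 1) by omega),
          if_neg (show ¬(i.val = n - 1 ∧ i.val + 1 = n - 1) by omega), sub_zero, sub_zero]
        by_cases hj0 : j.val = 0
        · rw [if_pos (Fin.ext (show i.val = j.val by omega)),
            show max i.val j.val = 0 by omega, show max (i.val + 1) j.val = 1 by omega, hi0]
          linear_combination hb' 0
        · rw [if_neg (show i ≠ j from fun h => hj0 (by rw [← h, hi0])),
            show max i.val j.val = j.val by omega, show max (i.val + 1) j.val = j.val by omega,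
            hi0]
          ring
    · by_cases hilast : i.val = n - 1
      · have h2n : 2 ≤ n := by omega
        rw [if_neg hi0, hgval (i.val - 1) (by omega), hgval i.val i.isLt,
          hg0 (i.val + 1) (by omega)]
        have eJm : J i ⟨i.val - 1, by omega⟩ = -b (i.val - 1) := by
          rw [hJ]
          simp only [Fin.ext_iff, Fin.val_mk]
          split_ifs <;> first | rfl | omega
        have eJi : J i ⟨i.val, i.isLt⟩ = b (i.val - 1) + b i.val := by
          rw [hJ]
          simp only [Fin.ext_iff, Fin.val_mk]
          split_ifs <;> first | rfl | omega
        rw [eJm, eJi, if_neg (show ¬(i.val = n - 1 ∧ i.val - 1 = n - 1) by omega), sub_zero,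
          if_pos ⟨hilast, hilast⟩]
        have hni : n - 1 = i.val := by omega
        have hai : a i.val ≠ 0 := by rw [← hni]; exact ha
        have hcm : c * a i.val = a n * b i.val := by
          rw [hcdef, hni]
          exact div_mul_cancel₀ _ hai
        have H1 : b (i.val - 1) * (a (i.val - 1) - a i.val) = 1 := by
          have := hb' (i.val - 1); rwa [show i.val - 1 + 1 = i.val by omega] at this
        have H2 : b i.val * (a i.val - a n) = 1 := by
          have := hb' i.val; rwa [show i.val + 1 = n by omega] at this
        by_cases hji : j.val = i.val
        · rw [if_pos (Fin.ext (show i.val = j.val by omega)),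
            show max (i.val - 1) j.val = i.val by omega, show max i.val j.val = i.val by omega]
          linear_combination H2 - hcm
        · rw [if_neg (show i ≠ j from fun h => hji ((congrArg Fin.val h).symm)),
            show max (i.val - 1) j.val = i.val - 1 by omega,
            show max i.val j.val = i.val by omega]
          linear_combination H2 - H1 - hcm
      · rw [if_neg hi0, hgval (i.val - 1) (by omega), hgval i.val i.isLt,
          hgval (i.val + 1) (by omega)]
        have eJm : J i ⟨i.val - 1, by omega⟩ = -b (i.val - 1) := by
          rw [hJ]
          simp only [Fin.ext_iff, Fin.val_mk]
          split_ifs <;> first | rfl | omega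
        have eJi : J i ⟨i.val, i.isLt⟩ = b (i.val - 1) + b i.val := by
          rw [hJ]
          simp only [Fin.ext_iff, Fin.val_mk]
          split_ifs <;> first | rfl | omega
        have eJp : J i ⟨i.val + 1, by omega⟩ = -b i.val := by
          rw [hJ]
          simp only [Fin.ext_iff, Fin.val_mk]
          split_ifs <;> first | rfl | omega
        rw [eJm, eJi, eJp, if_neg (show ¬(i.val = n - 1 ∧ i.val - 1 = n - 1) by omega),
          if_neg (show ¬(i.val = n - 1 ∧ i.val = n - 1) by omega),
          if_neg (show ¬(i.val = n - 1 ∧ i.val + 1 = n - 1) by omega),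
          sub_zero, sub_zero, sub_zero]
        have H1 : b (i.val - 1) * (a (i.val - 1) - a i.val) = 1 := by
          have := hb' (i.val - 1); rwa [show i.val - 1 + 1 = i.val by omega] at this
        rcases lt_trichotomy j.val i.val with hj | hj | hj
        · rw [if_neg (show i ≠ j from fun h => (by omega : j.val ≠ i.val)
              ((congrArg Fin.val h).symm)),
            show max (i.val - 1) j.val = i.val - 1 by omega,
            show max i.val j.val = i.val by omega,
            show max (i.val + 1) j.val = i.val + 1 by omega]
          linear_combination hb' i.val - H1
        · rw [if_pos (Fin.ext (show i.val = j.val by omega)),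
            show max (i.val - 1) j.val = i.val by omega,
            show max i.val j.val = i.val by omega,
            show max (i.val + 1) j.val = i.val + 1 by omega]
          linear_combination hb' i.val
        · rw [if_neg (show i ≠ j from fun h => (by omega : j.val ≠ i.val)
              ((congrArg Fin.val h).symm)),
            show max (i.val - 1) j.val = j.val by omega,
            show max i.val j.val = j.val by omega,
            show max (i.val + 1) j.val = j.val by omega]
          ring
  · intro k h1 h2 h3
    show (J - c • E) i k * L k j = 0
    rw [hM]
    have hJ0 : J i k = 0 := by
      rw [hJ, if_neg (fun h => h2 (congrArg Fin.val h).symm), if_neg h3,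
        if_neg (fun h => h1 (by omega))]
    rw [hJ0, if_neg (fun ⟨hx, hy⟩ => h2 (by omega)), sub_zero, zero_mul]
end

section
/- Let $a$ be a complex sequence with $a_n \neq a_{n+1}$ for all $n$, $b_k = 1/(a_k - a_{k+1})$, and define monic polynomials by $p_0(z)=1$, $p_1(z) = z - b_0$, and $p_{n+1}(z) = (z - b_{n-1} - b_n) p_n(z) - b_{n-1}^2 p_{n-1}(z)$. Then for the $n \times n$ section $L_n$ of the $L$-matrix with entries $a_{\max(i,j)}$, one has $\det(1 - z L_n) = (-1)^n \left[\prod_{j=1}^{n-1}(a_{j-1}-a_j)\right]\left(a_{n-1} p_n(z) + a_n b_{n-1} p_{n-1}(z)\right)$ for all $z \in \mathbb{C}$. -/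
set_option maxHeartbeats 1600000

open Matrix Finset

namespace LSecAux

noncomputable def ee (g : ℕ → ℂ) : ℕ → ℂ
  | 0 => 1
  | 1 => g 0
  | (k+2) => g (k+1) * ee g (k+1) - ee g k

lemma ee_zero (g : ℕ → ℂ) : ee g 0 = 1 := rfl
lemma ee_one (g : ℕ → ℂ) : ee g 1 = g 0 := rfl
lemma ee_succ_succ (g : ℕ → ℂ) (k : ℕ) : ee g (k+2) = g (k+1) * ee g (k+1) - ee g k := rfl

lemma ee_congr (g g' : ℕ → ℂ) : ∀ k, (∀ i, i < k → g i = g' i) → ee g k = ee g' k := by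
  intro k
  induction k using Nat.twoStepInduction with
  | zero => intro _; rfl
  | one => intro h; simp [ee_one, h 0 one_pos]
  | more k ih ih1 =>
      intro h
      rw [ee_succ_succ, ee_succ_succ, h (k+1) (by omega), ih1 (fun i hi => h i (by omega)),
        ih (fun i hi => h i (by omega))]

lemma ee_top : ∀ (k : ℕ) (g : ℕ → ℂ),
    ee g (k+2) = g 0 * ee (fun i => g (i+1)) (k+1) - ee (fun i => g (i+2)) k := by
  intro k
  induction k using Nat.twoStepInduction with
  | zero => intro g; simp [ee_succ_succ, ee_one, ee_zero]; ring
  | one => intro g; simp [ee_succ_succ, ee_one, ee_zero]; ring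
  | more k ih ih1 =>
      intro g
      rw [show k+2+2 = (k+2)+2 from rfl, ee_succ_succ g (k+2), ih1 g, ih g,
        show k+2+1 = (k+1)+2 from rfl, ee_succ_succ (fun i => g (i+1)) (k+1),
        ee_succ_succ (fun i => g (i+2)) k]
      ring

def trid (g : ℕ → ℂ) (k : ℕ) : Matrix (Fin k) (Fin k) ℂ :=
  Matrix.of fun i j => if (i:ℕ) = (j:ℕ) then g (i:ℕ)
    else if (i:ℕ)+1 = (j:ℕ) ∨ (j:ℕ)+1 = (i:ℕ) then -1 else 0

lemma trid_apply (g : ℕ → ℂ) (k : ℕ) (i j : Fin k) :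
    trid g k i j = if (i:ℕ) = (j:ℕ) then g (i:ℕ)
      else if (i:ℕ)+1 = (j:ℕ) ∨ (j:ℕ)+1 = (i:ℕ) then -1 else 0 := rfl

lemma det_trid : ∀ (k : ℕ) (g : ℕ → ℂ), (trid g k).det = ee g k := by
  intro k
  induction k using Nat.twoStepInduction with
  | zero => intro g; simp [ee_zero]
  | one => intro g; rw [det_fin_one, ee_one, trid_apply]; simp
  | more k ih ih1 =>
      intro g
      rw [det_succ_row_zero, Fin.sum_univ_succ, Fin.sum_univ_succ]
      have htail : ∀ j : Fin k,
          ((-1:ℂ)) ^ ((j.succ.succ : Fin (k+2)) : ℕ) * trid g (k+2) 0 j.succ.succ *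
            ((trid g (k+2)).submatrix Fin.succ (j.succ.succ).succAbove).det = 0 := by
        intro j
        rw [trid_apply]
        norm_num [Fin.val_succ]
      rw [Finset.sum_eq_zero (fun j _ => htail j)]
      have hsub0 : (trid g (k+2)).submatrix Fin.succ ((0 : Fin (k+2)).succAbove)
          = trid (fun i => g (i+1)) (k+1) := by
        ext i j
        simp only [Fin.succAbove_zero, Matrix.submatrix_apply, trid_apply, Fin.val_succ]
        split_ifs <;> first | rfl | omega
      have hB : ((trid g (k+2)).submatrix Fin.succ ((Fin.succ (0:Fin (k+1))).succAbove)).det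
          = - ee (fun i => g (i+2)) k := by
        rw [Fin.succ_zero_eq_one]
        set B := (trid g (k+2)).submatrix Fin.succ ((1 : Fin (k+2)).succAbove) with hBdef
        rw [det_succ_column_zero, Fin.sum_univ_succ]
        have hB00 : B 0 0 = -1 := by
          show trid g (k+2) (Fin.succ 0) ((1 : Fin (k+2)).succAbove 0) = -1
          rw [Fin.one_succAbove_zero, trid_apply]
          simp
        have hBtail : ∀ i : Fin k,
            ((-1:ℂ)) ^ ((i.succ : Fin (k+1)) : ℕ) * B i.succ 0 *
              (B.submatrix i.succ.succAbove Fin.succ).det = 0 := by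
          intro i
          have : B i.succ 0 = 0 := by
            show trid g (k+2) (Fin.succ (Fin.succ i)) ((1 : Fin (k+2)).succAbove 0) = 0
            rw [Fin.one_succAbove_zero, trid_apply]
            simp [Fin.val_succ]
          rw [this]; ring
        rw [Finset.sum_eq_zero (fun i _ => hBtail i), hB00]
        have hsub2 : B.submatrix ((0 : Fin (k+1)).succAbove) Fin.succ
            = trid (fun i => g (i+2)) k := by
          ext i j
          show trid g (k+2) ((Fin.succ ((0 : Fin (k+1)).succAbove i)))
              ((1 : Fin (k+2)).succAbove j.succ) = _
          rw [Fin.succAbove_zero, show (1 : Fin (k+2)) = (Fin.succ (0 : Fin (k+1))) from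
            (Fin.succ_zero_eq_one).symm, Fin.succ_succAbove_succ, Fin.succAbove_zero]
          simp only [trid_apply, Fin.val_succ]
          split_ifs <;> first | rfl | omega
        rw [hsub2, ih]
        simp
      rw [hsub0, ih1, hB]
      have h00 : trid g (k+2) 0 0 = g 0 := by rw [trid_apply]; simp
      have h01 : trid g (k+2) 0 (Fin.succ 0) = -1 := by
        rw [trid_apply]; simp [Fin.val_succ]
      rw [h00, h01, ee_top]
      simp [Fin.val_succ]
      ring

lemma entry_val (z : ℂ) (a : ℕ → ℂ) (n i j : ℕ) (hi : i < n) (hj : j < n) :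
    (((if i = j then (1:ℂ) else 0) - z * a (max i j))
        - (if _ : i+1 < n then (if i+1 = j then (1:ℂ) else 0) - z * a (max (i+1) j) else 0))
      - (if _ : j+1 < n then
          (((if i = j+1 then (1:ℂ) else 0) - z * a (max i (j+1)))
            - (if _ : i+1 < n then (if i+1 = j+1 then (1:ℂ) else 0) - z * a (max (i+1) (j+1)) else 0))
        else 0)
    = if i = j then (if i+1 = n then 1 - z * a i else 2 - z * (a i - a (i+1)))
      else if i+1 = j ∨ j+1 = i then -1 else 0 := by
  rcases Nat.lt_trichotomy i j with hij | rfl | hij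
  · -- i < j
    have h1 : i + 1 < n := by omega
    simp only [dif_pos h1]
    by_cases hadj : j = i + 1
    · subst hadj
      by_cases h2 : i + 1 + 1 < n
      · simp only [dif_pos h2,
          if_neg (show ¬(i = i+1) by omega), if_pos (show i+1 = i+1 by omega),
          if_neg (show ¬(i = i+1+1) by omega), if_neg (show ¬(i+1 = i+1+1) by omega),
          if_pos (Or.inl (show i+1 = i+1 by omega) : i+1 = i+1 ∨ i+1+1 = i),
          show max i (i+1) = i+1 from by omega, Nat.max_self,
          show max i (i+1+1) = i+1+1 from by omega,
          show max (i+1) (i+1+1) = i+1+1 from by omega]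
        try simp only [eq_self_iff_true, if_true, true_or, or_true]
        ring
      · simp only [dif_neg h2,
          if_neg (show ¬(i = i+1) by omega), if_pos (show i+1 = i+1 by omega),
          if_pos (Or.inl (show i+1 = i+1 by omega) : i+1 = i+1 ∨ i+1+1 = i),
          show max i (i+1) = i+1 from by omega, Nat.max_self]
        try simp only [eq_self_iff_true, if_true, true_or, or_true]
        ring
    · have hfar : i + 1 < j := by omega
      by_cases h2 : j + 1 < n
      · simp only [dif_pos h2,
          if_neg (show ¬(i = j) by omega), if_neg (show ¬(i+1 = j) by omega),
          if_neg (show ¬(i = j+1) by omega), if_neg (show ¬(i+1 = j+1) by omega),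
          if_neg (not_or_intro (show ¬(i+1 = j) by omega) (show ¬(j+1 = i) by omega)),
          show max i j = j from by omega, show max (i+1) j = j from by omega,
          show max i (j+1) = j+1 from by omega, show max (i+1) (j+1) = j+1 from by omega]
        try simp only [eq_self_iff_true, if_true, true_or, or_true]
        ring
      · simp only [dif_neg h2,
          if_neg (show ¬(i = j) by omega), if_neg (show ¬(i+1 = j) by omega),
          if_neg (not_or_intro (show ¬(i+1 = j) by omega) (show ¬(j+1 = i) by omega)),
          show max i j = j from by omega, show max (i+1) j = j from by omega]
        try simp only [eq_self_iff_true, if_true, true_or, or_true]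
        ring
  · -- i = j
    by_cases h1 : i + 1 < n
    · simp only [dif_pos h1,
        if_pos (show i = i by rfl), if_neg (show ¬(i+1 = i) by omega),
        if_neg (show ¬(i = i+1) by omega), if_pos (show i+1 = i+1 by omega),
        if_neg (show ¬(i+1 = n) by omega),
        Nat.max_self, show max (i+1) i = i+1 from by omega,
        show max i (i+1) = i+1 from by omega]
      try simp only [eq_self_iff_true, if_true, true_or, or_true]
      ring
    · simp only [dif_neg h1,
        if_pos (show i = i by rfl), if_pos (show i+1 = n by omega),
        Nat.max_self]
      try simp only [eq_self_iff_true, if_true, true_or, or_true]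
      ring
  · -- j < i
    have h2 : j + 1 < n := by omega
    simp only [dif_pos h2]
    by_cases hadj : i = j + 1
    · subst hadj
      by_cases h1 : j + 1 + 1 < n
      · simp only [dif_pos h1,
          if_neg (show ¬(j+1 = j) by omega), if_neg (show ¬(j+1+1 = j) by omega),
          if_pos (show j+1 = j+1 by omega), if_neg (show ¬(j+1+1 = j+1) by omega),
          if_pos (Or.inr (show j+1 = j+1 by omega) : j+1+1 = j ∨ j+1 = j+1),
          show max (j+1) j = j+1 from by omega,
          show max (j+1+1) j = j+1+1 from by omega, Nat.max_self,
          show max (j+1+1) (j+1) = j+1+1 from by omega]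
        try simp only [eq_self_iff_true, if_true, true_or, or_true]
        ring
      · simp only [dif_neg h1,
          if_neg (show ¬(j+1 = j) by omega),
          if_pos (show j+1 = j+1 by omega),
          if_pos (Or.inr (show j+1 = j+1 by omega) : j+1+1 = j ∨ j+1 = j+1),
          show max (j+1) j = j+1 from by omega, Nat.max_self]
        try simp only [eq_self_iff_true, if_true, true_or, or_true]
        ring
    · have hfar : j + 1 < i := by omega
      by_cases h1 : i + 1 < n
      · simp only [dif_pos h1,
          if_neg (show ¬(i = j) by omega), if_neg (show ¬(i+1 = j) by omega),
          if_neg (show ¬(i = j+1) by omega), if_neg (show ¬(i+1 = j+1) by omega),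
          if_neg (not_or_intro (show ¬(i+1 = j) by omega) (show ¬(j+1 = i) by omega)),
          show max i j = i from by omega, show max (i+1) j = i+1 from by omega,
          show max i (j+1) = i from by omega, show max (i+1) (j+1) = i+1 from by omega]
        try simp only [eq_self_iff_true, if_true, true_or, or_true]
        ring
      · simp only [dif_neg h1,
          if_neg (show ¬(i = j) by omega),
          if_neg (show ¬(i = j+1) by omega),
          if_neg (not_or_intro (show ¬(i+1 = j) by omega) (show ¬(j+1 = i) by omega)),
          show max i j = i from by omega, show max i (j+1) = i from by omega]
        try simp only [eq_self_iff_true, if_true, true_or, or_true]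
        ring

lemma sum_indicator {n : ℕ} (f : Fin n → ℂ) (v : ℕ) :
    (∑ k : Fin n, if v = (k:ℕ) then f k else 0) = if h : v < n then f ⟨v, h⟩ else 0 := by
  split
  · next h =>
      rw [Finset.sum_eq_single ⟨v, h⟩]
      · simp
      · intro k _ hk
        rw [if_neg]
        intro hv
        exact hk (Fin.ext hv.symm)
      · intro hk; exact absurd (Finset.mem_univ _) hk
  · next h =>
      apply Finset.sum_eq_zero
      intro k _
      rw [if_neg]
      intro hv
      exact h (hv ▸ k.isLt)

lemma helper1 {n : ℕ} (f : Fin n → ℂ) (i : Fin n) :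
    (∑ k : Fin n, (if (i:ℕ) = (k:ℕ) then (1:ℂ) else if (i:ℕ)+1 = (k:ℕ) then -1 else 0) * f k)
      = f i - (if h : (i:ℕ)+1 < n then f ⟨(i:ℕ)+1, h⟩ else 0) := by
  have hsplit : ∀ k : Fin n,
      (if (i:ℕ) = (k:ℕ) then (1:ℂ) else if (i:ℕ)+1 = (k:ℕ) then -1 else 0) * f k
        = (if (i:ℕ) = (k:ℕ) then f k else 0) + (-(if (i:ℕ)+1 = (k:ℕ) then f k else 0)) := by
    intro k
    split_ifs with h1 h2 <;> first | omega | ring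
  rw [Finset.sum_congr rfl (fun k _ => hsplit k), Finset.sum_add_distrib, Finset.sum_neg_distrib,
    sum_indicator, sum_indicator, dif_pos i.isLt]
  have hieta : (⟨(i:ℕ), i.isLt⟩ : Fin n) = i := Fin.ext rfl
  rw [hieta]
  ring

lemma helper2 {n : ℕ} (f : Fin n → ℂ) (j : Fin n) :
    (∑ l : Fin n, f l * (if (j:ℕ) = (l:ℕ) then (1:ℂ) else if (j:ℕ)+1 = (l:ℕ) then -1 else 0))
      = f j - (if h : (j:ℕ)+1 < n then f ⟨(j:ℕ)+1, h⟩ else 0) := by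
  rw [← helper1 f j]
  exact Finset.sum_congr rfl (fun l _ => mul_comm _ _)

def Tmat (n : ℕ) : Matrix (Fin n) (Fin n) ℂ :=
  Matrix.of fun i j => if (i:ℕ) = (j:ℕ) then 1 else if (i:ℕ)+1 = (j:ℕ) then -1 else 0

lemma Tmat_apply (n : ℕ) (i j : Fin n) :
    Tmat n i j = if (i:ℕ) = (j:ℕ) then 1 else if (i:ℕ)+1 = (j:ℕ) then -1 else 0 := rfl

lemma det_Tmat (n : ℕ) : (Tmat n).det = 1 := by
  rw [Matrix.det_of_upperTriangular (M := Tmat n)]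
  · apply Finset.prod_eq_one
    intro i _
    rw [Tmat_apply, if_pos rfl]
  · intro i j hij
    have : (j:ℕ) < (i:ℕ) := hij
    rw [Tmat_apply, if_neg (by omega), if_neg (by omega)]

lemma conj (n : ℕ) (z : ℂ) (a : ℕ → ℂ) (L : Matrix (Fin n) (Fin n) ℂ)
    (hL : ∀ i j : Fin n, L i j = a (max i.val j.val)) :
    Tmat n * (1 - z • L) * (Tmat n)ᵀ
      = trid (fun i => if i + 1 = n then 1 - z * a i else 2 - z * (a i - a (i+1))) n := by
  have hM : ∀ s t : Fin n, (1 - z • L) s t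
      = ((if (s:ℕ) = (t:ℕ) then (1:ℂ) else 0) - z * a (max (s:ℕ) (t:ℕ))) := by
    intro s t
    simp only [Matrix.sub_apply, Matrix.one_apply, Matrix.smul_apply, smul_eq_mul, hL]
    congr 1
    by_cases hst : s = t
    · subst hst; rw [if_pos rfl, if_pos rfl]
    · rw [if_neg hst, if_neg (fun hc => hst (Fin.ext hc))]
  have hTM : ∀ (i l : Fin n), (Tmat n * (1 - z • L)) i l
      = ((if (i:ℕ) = (l:ℕ) then (1:ℂ) else 0) - z * a (max (i:ℕ) (l:ℕ)))
        - (if h : (i:ℕ)+1 < n then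
            (if (i:ℕ)+1 = (l:ℕ) then (1:ℂ) else 0) - z * a (max ((i:ℕ)+1) (l:ℕ)) else 0) := by
    intro i l
    rw [Matrix.mul_apply]
    calc (∑ k : Fin n, Tmat n i k * (1 - z • L) k l)
        = ∑ k : Fin n, (if (i:ℕ) = (k:ℕ) then (1:ℂ) else if (i:ℕ)+1 = (k:ℕ) then -1 else 0)
            * (1 - z • L) k l := rfl
      _ = (1 - z • L) i l - (if h : (i:ℕ)+1 < n then (1 - z • L) ⟨(i:ℕ)+1, h⟩ l else 0) :=
          helper1 _ i
      _ = _ := by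
          rw [hM i l]
          congr 1
          split
          · rw [hM]
          · rfl
  ext i j
  rw [Matrix.mul_apply]
  calc (∑ l : Fin n, (Tmat n * (1 - z • L)) i l * (Tmat n)ᵀ l j)
      = ∑ l : Fin n, (Tmat n * (1 - z • L)) i l
          * (if (j:ℕ) = (l:ℕ) then (1:ℂ) else if (j:ℕ)+1 = (l:ℕ) then -1 else 0) := rfl
    _ = (Tmat n * (1 - z • L)) i j
        - (if h : (j:ℕ)+1 < n then (Tmat n * (1 - z • L)) i ⟨(j:ℕ)+1, h⟩ else 0) :=
        helper2 _ j
    _ = _ := by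
        rw [hTM i j]
        have hstep : (if h : (j:ℕ)+1 < n then (Tmat n * (1 - z • L)) i ⟨(j:ℕ)+1, h⟩ else 0)
            = (if _ : (j:ℕ)+1 < n then
                (((if (i:ℕ) = (j:ℕ)+1 then (1:ℂ) else 0) - z * a (max (i:ℕ) ((j:ℕ)+1)))
                  - (if _ : (i:ℕ)+1 < n then
                      (if (i:ℕ)+1 = (j:ℕ)+1 then (1:ℂ) else 0) - z * a (max ((i:ℕ)+1) ((j:ℕ)+1))
                    else 0))
              else 0) := by
          split
          · rw [hTM]
          · rfl
        rw [hstep]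
        exact entry_val z a n i j i.isLt j.isLt

lemma pz_zero (a : ℕ → ℂ)
    (b : ℕ → ℂ)
    (p : ℕ → ℂ) (hp0 : p 0 = 1) (hp1 : p 1 = (0:ℂ) - b 0)
    (hprec : ∀ m : ℕ, 1 ≤ m →
      p (m + 1) = ((0:ℂ) - b (m - 1) - b m) * p m - (b (m - 1)) ^ 2 * p (m - 1)) :
    ∀ k, p k = (-1)^k * ∏ j ∈ Finset.range k, b j := by
  intro k
  induction k using Nat.twoStepInduction with
  | zero => simpa using hp0
  | one => rw [hp1]; simp
  | more k ih ih1 =>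
      have hr := hprec (k+1) (by omega)
      simp only [Nat.add_sub_cancel] at hr
      rw [hr, ih, ih1, Finset.prod_range_succ, Finset.prod_range_succ (f := b) (n := k+1),
        Finset.prod_range_succ (f := b) (n := k)]
      ring

lemma zero_alg (z x B : ℂ) (hB : B ≠ 0) (hx : x = 1/B) :
    z * (2 - z * x) = (-1)^(0+1) * ((z * x - 1) * (z - B) - B * 1) := by
  subst hx; field_simp; ring

lemma one_alg (z x y B C p1 p2 : ℂ) (hB : B ≠ 0) (hC : C ≠ 0)
    (hx : x = 1/B) (hy : y = 1/C)
    (hp1 : p1 = z - B)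
    (hp2 : p2 = (z - B - C) * p1 - B^2 * 1) :
    z * ((2 - z * y) * (2 - z * x) - 1) = x * ((z * y - 1) * p2 - C * p1) := by
  subst hp2 hp1 hx hy
  field_simp
  ring

lemma step_alg (z x y w B C D p0 p1 p2 p3 : ℂ)
    (hB : B ≠ 0) (hC : C ≠ 0) (hD : D ≠ 0)
    (hx : x = 1/B) (hy : y = 1/C) (hw : w = 1/D)
    (hp3 : p3 = (z - C - D) * p2 - C^2 * p1)
    (hp2 : p2 = (z - B - C) * p1 - B^2 * p0) :
    (2 - z*w) * (x * ((z*y - 1) * p2 - C * p1)) + ((z*x - 1) * p1 - B * p0)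
      = -(x * y * ((z*w - 1) * p3 - D * p2)) := by
  subst hp3 hp2 hx hy hw
  field_simp
  ring

lemma Dk (a : ℕ → ℂ) (hreg : ∀ m : ℕ, a m ≠ a (m + 1))
    (b : ℕ → ℂ) (hb : ∀ m : ℕ, b m = 1 / (a m - a (m + 1)))
    (z : ℂ) (p : ℕ → ℂ) (hp0 : p 0 = 1) (hp1 : p 1 = z - b 0)
    (hprec : ∀ m : ℕ, 1 ≤ m →
      p (m + 1) = (z - b (m - 1) - b m) * p m - (b (m - 1)) ^ 2 * p (m - 1)) :
    ∀ k, z * ee (fun i => 2 - z * (a i - a (i+1))) (k+1)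
      = (-1)^(k+1) * (∏ j ∈ Finset.range k, (a j - a (j + 1)))
          * ((z * (a k - a (k+1)) - 1) * p (k+1) - b k * p k) := by
  have hne : ∀ m, a m - a (m+1) ≠ 0 := fun m => sub_ne_zero.mpr (hreg m)
  have hbne : ∀ m, b m ≠ 0 := fun m => by rw [hb]; exact one_div_ne_zero (hne m)
  have hinv : ∀ m, a m - a (m+1) = 1 / b m := fun m => by rw [hb, one_div_one_div]
  intro k
  induction k using Nat.twoStepInduction with
  | zero =>
      rw [hp1, hp0]
      simp only [ee_one, Finset.range_zero, Finset.prod_empty]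
      have h := zero_alg z (a 0 - a 1) (b 0) (hbne 0) (by simpa using hinv 0)
      calc z * (2 - z * (a 0 - a (0+1)))
          = z * (2 - z * (a 0 - a 1)) := by norm_num
        _ = (-1)^(0+1) * ((z * (a 0 - a 1) - 1) * (z - b 0) - b 0 * 1) := h
        _ = (-1)^(0+1) * 1 * ((z * (a 0 - a (0+1)) - 1) * (z - b 0) - b 0 * 1) := by norm_num
  | one =>
      have hr := hprec 1 (by omega)
      norm_num at hr
      rw [ee_succ_succ]
      simp only [ee_one, ee_zero, Finset.prod_range_one]
      have h := one_alg z (a 0 - a 1) (a 1 - a 2) (b 0) (b 1) (p 1) (p 2)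
        (hbne 0) (hbne 1) (by simpa using hinv 0) (by simpa using hinv 1)
        (by rw [hp1]) (by rw [hr, hp0])
      calc z * ((2 - z * (a (0+1) - a (0+1+1))) * (2 - z * (a 0 - a (0+1))) - 1)
          = z * ((2 - z * (a 1 - a 2)) * (2 - z * (a 0 - a 1)) - 1) := by norm_num
        _ = (a 0 - a 1) * ((z * (a 1 - a 2) - 1) * p 2 - b 1 * p 1) := h
        _ = (-1)^(1+1) * (a 0 - a (0+1)) * ((z * (a 1 - a (1+1)) - 1) * p (1+1) - b 1 * p 1) := by
            norm_num
  | more k ih ih1 =>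
      have hp3 := hprec (k+2) (by omega)
      simp only [Nat.add_sub_cancel, show k+2+1 = k+3 from rfl, show k+2-1 = k+1 from rfl] at hp3
      have hp2 := hprec (k+1) (by omega)
      simp only [Nat.add_sub_cancel, show k+1+1 = k+2 from rfl] at hp2
      have expand : z * ee (fun i => 2 - z * (a i - a (i+1))) ((k+1)+2)
          = (2 - z * (a (k+2) - a (k+3))) * (z * ee (fun i => 2 - z * (a i - a (i+1))) (k+2))
            - z * ee (fun i => 2 - z * (a i - a (i+1))) (k+1) := by
        rw [ee_succ_succ]; ring
      rw [show k+2+1 = (k+1)+2 from rfl, expand, ih1, ih]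
      simp only [Finset.prod_range_succ, show k+1+1 = k+2 from rfl, show k+2+1 = k+3 from rfl]
      have h := step_alg z (a k - a (k+1)) (a (k+1) - a (k+2)) (a (k+2) - a (k+3))
        (b k) (b (k+1)) (b (k+2)) (p k) (p (k+1)) (p (k+2)) (p (k+3))
        (hbne k) (hbne (k+1)) (hbne (k+2))
        (hinv k) (by simpa using hinv (k+1)) (by simpa using hinv (k+2))
        hp3 hp2
      linear_combination ((-1:ℂ)^(k+2) * ∏ j ∈ Finset.range k, (a j - a (j + 1))) * h

lemma n1_alg (z x B A0 A1 : ℂ) (hB : B ≠ 0) (hx : x = 1/B) (hA0 : A0 = A1 + x) :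
    1 - z * A0 = (-1)^1 * 1 * (A0 * (z - B) + A1 * B * 1) := by
  subst hA0 hx; field_simp; ring

lemma n2_alg (z x y B C A1 A2 : ℂ) (hB : B ≠ 0) (hC : C ≠ 0)
    (hx : x = 1/B) (hy : y = 1/C) (hA2 : A2 = A1 - y) :
    (1 - z * A1) * ((-1)^(0+1) * 1 * ((z * x - 1) * (z - B) - B * 1)) - z * 1
      = z * ((-1)^2 * x * (A1 * ((z - B - C) * (z - B) - B^2 * 1) + A2 * C * (z - B))) := by
  subst hA2 hx hy; field_simp; ring

lemma final_alg (z x y w B C D p0 p1 p2 p3 A2 A3 : ℂ)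
    (hB : B ≠ 0) (hC : C ≠ 0) (hD : D ≠ 0)
    (hx : x = 1/B) (hy : y = 1/C) (hw : w = 1/D)
    (hA3 : A3 = A2 - w)
    (hp3 : p3 = (z - C - D) * p2 - C^2 * p1)
    (hp2 : p2 = (z - B - C) * p1 - B^2 * p0) :
    -((1 - z*A2) * (x * ((z*y - 1) * p2 - C * p1))) - ((z*x - 1) * p1 - B * p0)
      = z * (x * y * (A2 * p3 + A3 * D * p2)) := by
  subst hp3 hp2 hA3 hx hy hw
  field_simp
  ring

end LSecAux

/-- With `p` the monic orthogonal polynomials of the Jacobi matrix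
(`p 0 = 1`, `p 1 = z - b 0`, three-term recurrence), the characteristic function of
the `n × n` section `L` of the `L`-matrix satisfies
`det (1 - z L) = (-1)^n (∏_{j=1}^{n-1} (a (j-1) - a j)) (a (n-1) p n + a n * b (n-1) * p (n-1))`. -/
theorem det_one_sub_smul_L_section (a : ℕ → ℂ)
    (hreg : ∀ m : ℕ, a m ≠ a (m + 1))
    (b : ℕ → ℂ) (hb : ∀ m : ℕ, b m = 1 / (a m - a (m + 1)))
    (z : ℂ) (p : ℕ → ℂ)
    (hp0 : p 0 = 1) (hp1 : p 1 = z - b 0)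
    (hprec : ∀ m : ℕ, 1 ≤ m →
      p (m + 1) = (z - b (m - 1) - b m) * p m - (b (m - 1)) ^ 2 * p (m - 1))
    (n : ℕ) (hn : 1 ≤ n)
    (L : Matrix (Fin n) (Fin n) ℂ)
    (hL : ∀ i j : Fin n, L i j = a (max i.val j.val)) :
    (1 - z • L).det
      = (-1) ^ n * (∏ j ∈ Finset.range (n - 1), (a j - a (j + 1)))
          * (a (n - 1) * p n + a n * b (n - 1) * p (n - 1)) := by
  have hne : ∀ m, a m - a (m+1) ≠ 0 := fun m => sub_ne_zero.mpr (hreg m)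
  have hbne : ∀ m, b m ≠ 0 := fun m => by rw [hb]; exact one_div_ne_zero (hne m)
  have hinv : ∀ m, a m - a (m+1) = 1 / b m := fun m => by rw [hb, one_div_one_div]
  by_cases hz : z = 0
  · -- z = 0 case
    subst hz
    rw [zero_smul, sub_zero, Matrix.det_one]
    have hpz := LSecAux.pz_zero a b p hp0 hp1 hprec
    obtain ⟨N, rfl⟩ : ∃ N, n = N + 1 := ⟨n - 1, by omega⟩
    simp only [Nat.add_sub_cancel]
    rw [hpz (N+1), hpz N, Finset.prod_range_succ (f := b) (n := N)]
    have key : (∏ j ∈ Finset.range N, (a j - a (j+1))) * (∏ j ∈ Finset.range N, b j) = 1 := by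
      rw [← Finset.prod_mul_distrib]
      exact Finset.prod_eq_one (fun j _ => by
        rw [hb, mul_one_div, div_self (hne j)])
    have hS : ((-1:ℂ))^N * (-1)^N = 1 := by rw [← mul_pow]; norm_num
    have hbcN : b N * (a N - a (N+1)) = 1 := by
      rw [hb, one_div_mul_cancel (hne N)]
    linear_combination
      (-((∏ j ∈ Finset.range N, (a j - a (j+1))) * (∏ j ∈ Finset.range N, b j))
          * (b N * (a N - a (N+1)))) * hS
        + (-(b N * (a N - a (N+1)))) * key
        + (-1 : ℂ) * hbcN
  · -- z ≠ 0 case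
    have hdet : (1 - z • L).det
        = LSecAux.ee (fun i => if i + 1 = n then 1 - z * a i else 2 - z * (a i - a (i+1))) n := by
      calc (1 - z • L).det
          = (LSecAux.Tmat n).det * (1 - z • L).det * ((LSecAux.Tmat n)ᵀ).det := by
            rw [LSecAux.det_Tmat, Matrix.det_transpose, LSecAux.det_Tmat]; ring
        _ = (LSecAux.Tmat n * (1 - z • L) * (LSecAux.Tmat n)ᵀ).det := by
            rw [Matrix.det_mul, Matrix.det_mul]
        _ = _ := by rw [LSecAux.conj n z a L hL, LSecAux.det_trid]
    rw [hdet]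
    obtain ⟨N, rfl⟩ : ∃ N, n = N + 1 := ⟨n - 1, by omega⟩
    simp only [Nat.add_sub_cancel]
    cases N with
    | zero =>
        rw [LSecAux.ee_one]
        simp only [Finset.range_zero, Finset.prod_empty, zero_add, if_pos rfl]
        rw [hp1, hp0]
        exact LSecAux.n1_alg z (a 0 - a 1) (b 0) (a 0) (a 1) (hbne 0)
          (by simpa using hinv 0) (by ring)
    | succ K =>
        rw [LSecAux.ee_succ_succ]
        have hg1 : LSecAux.ee (fun i => if i + 1 = K+2 then 1 - z * a i else 2 - z * (a i - a (i+1))) (K+1)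
            = LSecAux.ee (fun i => 2 - z * (a i - a (i+1))) (K+1) :=
          LSecAux.ee_congr _ _ _ (fun i hi => by rw [if_neg (by omega)])
        have hg0 : LSecAux.ee (fun i => if i + 1 = K+2 then 1 - z * a i else 2 - z * (a i - a (i+1))) K
            = LSecAux.ee (fun i => 2 - z * (a i - a (i+1))) K :=
          LSecAux.ee_congr _ _ _ (fun i hi => by rw [if_neg (by omega)])
        rw [hg1, hg0, show (if (K+1) + 1 = K+2 then 1 - z * a (K+1) else 2 - z * (a (K+1) - a (K+1+1)))
            = 1 - z * a (K+1) from if_pos rfl]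
        refine mul_left_cancel₀ hz ?_
        have rearr : z * ((1 - z * a (K+1)) * LSecAux.ee (fun i => 2 - z * (a i - a (i+1))) (K+1)
              - LSecAux.ee (fun i => 2 - z * (a i - a (i+1))) K)
            = (1 - z * a (K+1)) * (z * LSecAux.ee (fun i => 2 - z * (a i - a (i+1))) (K+1))
              - z * LSecAux.ee (fun i => 2 - z * (a i - a (i+1))) K := by ring
        rw [rearr]
        have hDk := LSecAux.Dk a hreg b hb z p hp0 hp1 hprec
        cases K with
        | zero =>
            rw [hDk 0, LSecAux.ee_zero]
            simp only [Finset.range_zero, Finset.prod_empty, Finset.prod_range_one]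
            have hr := hprec 1 (by omega)
            norm_num at hr
            have h := LSecAux.n2_alg z (a 0 - a 1) (a 1 - a 2) (b 0) (b 1) (a 1) (a 2)
              (hbne 0) (hbne 1) (by simpa using hinv 0) (by simpa using hinv 1) (by ring)
            rw [hp1, hp0, show p 2 = (z - b 0 - b 1) * (z - b 0) - b 0 ^2 * 1 from by
              rw [hr, hp1, hp0]]
            rw [show (∏ j ∈ Finset.range (0+1), (a j - a (j+1))) = a 0 - a (0+1) from by
              simp]
            linear_combination h
        | succ J =>
            rw [hDk (J+1), hDk J]
            have hp3 := hprec (J+2) (by omega)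
            simp only [Nat.add_sub_cancel, show J+2+1 = J+3 from rfl,
              show J+2-1 = J+1 from rfl] at hp3
            have hp2 := hprec (J+1) (by omega)
            simp only [Nat.add_sub_cancel, show J+1+1 = J+2 from rfl] at hp2
            simp only [Finset.prod_range_succ, show J+1+1 = J+2 from rfl,
              show J+1+1+1 = J+3 from rfl, show J+2+1 = J+3 from rfl]
            have h := LSecAux.final_alg z (a J - a (J+1)) (a (J+1) - a (J+2)) (a (J+2) - a (J+3))
              (b J) (b (J+1)) (b (J+2)) (p J) (p (J+1)) (p (J+2)) (p (J+3)) (a (J+2)) (a (J+3))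
              (hbne J) (hbne (J+1)) (hbne (J+2))
              (hinv J) (by simpa using hinv (J+1)) (by simpa using hinv (J+2))
              (by ring) hp3 hp2
            linear_combination ((-1:ℂ)^(J+1) * ∏ j ∈ Finset.range J, (a j - a (j + 1))) * h
end

section
/- Fix $\nu \in \mathbb{R}$ with $\nu \notin \{0,-1,-2,\dots\}$ and let $b_n(\nu) = (n+\nu)(n+\nu+1)$. For every finitely supported sequence $\phi$, the quadratic form of the Jacobi matrix $J_\nu$ (with diagonal $b_{n-1}(\nu)+b_n(\nu)$, convention $b_{-1}=0$ replaced by diagonal entry $b_0(\nu)$ at $n=0$, and off-diagonals $-b_n(\nu)$) satisfies $\langle \phi, J_\nu \phi \rangle = \nu |\phi_0|^2 + \sum_{n=1}^\infty \left| (n+\nu)\phi_n - (n-1+\nu)\phi_{n-1} \right|^2$. In particular, $\langle \phi, J_\nu \phi \rangle \geq \min(0,\nu) \|\phi\|^2$. -/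
/-- For `ν ∈ ℝ \ (-ℕ₀)` and `b n = (n+ν)(n+ν+1)`, the quadratic form of
the Jacobi matrix `J_ν` on a finitely supported sequence `φ` equals
`ν |φ 0|² + ∑_{n≥1} |(n+ν) φ n - (n-1+ν) φ (n-1)|²` (the sum reindexed by `n ↦ n+1`);
in particular it is bounded below by `min 0 ν * ‖φ‖²`. -/
theorem jacobi_quadratic_form (ν : ℝ) (hν : ∀ m : ℕ, ν ≠ -(m : ℝ))
    (b : ℕ → ℝ) (hb : ∀ n : ℕ, b n = ((n : ℝ) + ν) * ((n : ℝ) + ν + 1))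
    (φ : ℕ → ℂ) (hsupp : ∃ N : ℕ, ∀ n ≥ N, φ n = 0)
    (Jφ : ℕ → ℂ)
    (hJ0 : Jφ 0 = (b 0 : ℂ) * φ 0 - (b 0 : ℂ) * φ 1)
    (hJn : ∀ n : ℕ, Jφ (n + 1) =
      -(b n : ℂ) * φ n + ((b n : ℂ) + (b (n + 1) : ℂ)) * φ (n + 1)
        - (b (n + 1) : ℂ) * φ (n + 2)) :
    (∑' n : ℕ, (starRingEnd ℂ) (φ n) * Jφ n)
        = ((ν * ‖φ 0‖ ^ 2
            + ∑' n : ℕ, ‖((n : ℂ) + 1 + (ν : ℂ)) * φ (n + 1)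
                - ((n : ℂ) + (ν : ℂ)) * φ n‖ ^ 2 : ℝ) : ℂ) ∧
    min 0 ν * (∑' n : ℕ, ‖φ n‖ ^ 2)
      ≤ ν * ‖φ 0‖ ^ 2
          + ∑' n : ℕ, ‖((n : ℂ) + 1 + (ν : ℂ)) * φ (n + 1)
              - ((n : ℂ) + (ν : ℂ)) * φ n‖ ^ 2 := by
  obtain ⟨N, hN⟩ := hsupp
  set t : ℕ → ℂ := fun n => ((n : ℂ) + 1 + (ν : ℂ)) * φ (n + 1) - ((n : ℂ) + (ν : ℂ)) * φ n
    with ht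
  have hbc : ∀ n : ℕ, (b n : ℂ) = ((n : ℂ) + ν) * ((n : ℂ) + ν + 1) := by
    intro n; rw [hb]; push_cast; ring
  -- key telescoping identity
  have key : ∀ M : ℕ, ∑ n ∈ Finset.range (M + 1), (starRingEnd ℂ) (φ n) * Jφ n
      = (ν : ℂ) * ((starRingEnd ℂ) (φ 0) * φ 0)
        + ∑ n ∈ Finset.range M, (starRingEnd ℂ) (t n) * t n
        - (b M : ℂ) * (starRingEnd ℂ) (φ M) * φ (M + 1)
        + ((M : ℂ) + ν) ^ 2 * ((starRingEnd ℂ) (φ M) * φ M) := by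
    intro M
    induction M with
    | zero =>
      rw [Finset.sum_range_one, hJ0, hbc]
      simp only [Finset.range_zero, Finset.sum_empty]
      push_cast
      ring
    | succ M ih =>
      rw [Finset.sum_range_succ, ih, Finset.sum_range_succ, hJn M]
      simp only [ht, hbc, map_sub, map_mul, map_add, map_one, Complex.conj_ofReal,
        Complex.conj_natCast]
      push_cast
      ring
  -- vanishing of terms
  have hJvan : ∀ n ∉ Finset.range (N + 2), (starRingEnd ℂ) (φ n) * Jφ n = 0 := by
    intro n hn
    simp only [Finset.mem_range, not_lt] at hn
    obtain ⟨m, rfl⟩ : ∃ m, n = m + 1 := ⟨n - 1, by omega⟩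
    rw [hJn m, hN m (by omega), hN (m + 1) (by omega), hN (m + 2) (by omega)]
    ring
  have htvan : ∀ n ∉ Finset.range (N + 1), ‖t n‖ ^ 2 = 0 := by
    intro n hn
    simp only [Finset.mem_range, not_lt] at hn
    simp only [ht, hN n (by omega), hN (n + 1) (by omega), mul_zero, sub_zero, norm_zero]
    ring
  have htvan' : ∀ n ∉ Finset.range (N + 1), t n = 0 := by
    intro n hn
    simp only [Finset.mem_range, not_lt] at hn
    simp [ht, hN n (by omega), hN (n + 1) (by omega)]
  have h1 : (∑' n : ℕ, (starRingEnd ℂ) (φ n) * Jφ n)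
      = ∑ n ∈ Finset.range (N + 2), (starRingEnd ℂ) (φ n) * Jφ n := tsum_eq_sum hJvan
  have h2 : (∑' n : ℕ, ‖t n‖ ^ 2) = ∑ n ∈ Finset.range (N + 1), ‖t n‖ ^ 2 :=
    tsum_eq_sum htvan
  have hconj : ∀ z : ℂ, (starRingEnd ℂ) z * z = ((‖z‖ : ℂ)) ^ 2 := by
    intro z; rw [mul_comm, Complex.mul_conj']
  have hmain : (∑' n : ℕ, (starRingEnd ℂ) (φ n) * Jφ n)
      = ((ν * ‖φ 0‖ ^ 2 + ∑' n : ℕ, ‖t n‖ ^ 2 : ℝ) : ℂ) := by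
    rw [h1, h2, key (N + 1), hN (N + 1) (Nat.le_succ N), hN (N + 2) (by omega)]
    push_cast
    rw [← hconj (φ 0), Finset.sum_congr rfl (fun n _ => (hconj (t n)).symm)]
    ring
  refine ⟨hmain, ?_⟩
  have hSnn : 0 ≤ ∑' n : ℕ, ‖t n‖ ^ 2 := tsum_nonneg fun n => sq_nonneg _
  have hsum : Summable (fun n : ℕ => ‖φ n‖ ^ 2) := by
    apply summable_of_ne_finset_zero (s := Finset.range (N + 1))
    intro n hn
    simp only [Finset.mem_range, not_lt] at hn
    simp [hN n (by omega)]
  rcases le_or_gt 0 ν with h | h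
  · rw [min_eq_left h]
    have : 0 ≤ ν * ‖φ 0‖ ^ 2 := mul_nonneg h (sq_nonneg _)
    nlinarith
  · rw [min_eq_right h.le]
    have hge : ‖φ 0‖ ^ 2 ≤ ∑' n : ℕ, ‖φ n‖ ^ 2 :=
      Summable.le_tsum hsum 0 fun j _ => sq_nonneg _
    nlinarith
end

section
/- Let $\nu \in \mathbb{R} \setminus (-\mathbb{N}_0)$ and let $\phi_n(z;\nu)$ solve the recurrence $-(n-1+\nu)(n+\nu)\phi_{n-1} + [2(n+\nu)^2 - 1/4 + z^2]\phi_n - (n+\nu)(n+1+\nu)\phi_{n+1} = 0$ with the asymptotics $\phi_n(z;\nu) = \frac{n^{-z-1/2}}{\Gamma(1+2z)}(1+O(1/n))$. Then the Wronskian $W(\phi(z;\nu),\phi(-z;\nu)) := -(n+\nu)(n+\nu+1)[\phi_{n+1}(z;\nu)\phi_n(-z;\nu) - \phi_{n+1}(-z;\nu)\phi_n(z;\nu)]$ is independent of $n$ and equals $\sin(2\pi z)/\pi$. -/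
open Complex Filter Asymptotics Real Topology

private lemma aux_inv_tendsto : Tendsto (fun n : ℕ => ((n : ℂ))⁻¹) atTop (𝓝 0) := by
  have h1 : Tendsto (fun n : ℕ => ((n : ℝ))⁻¹) atTop (𝓝 0) :=
    tendsto_inv_atTop_zero.comp tendsto_natCast_atTop_atTop
  have h2 := (Complex.continuous_ofReal.tendsto 0).comp h1
  simpa [Function.comp_def] using h2

private lemma aux_D (w : ℂ) :
    Tendsto (fun n : ℕ => (n : ℂ) * (((1 : ℂ) + (n : ℂ)⁻¹) ^ w - 1)) atTop (𝓝 w) := by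
  have hd : HasDerivAt (fun x : ℂ => (1 + x) ^ w) (w * (1 + 0 : ℂ) ^ (w - 1) * 1) 0 :=
    ((hasDerivAt_id (0 : ℂ)).const_add 1).cpow_const (by simp [Complex.one_mem_slitPlane])
  simp only [add_zero, Complex.one_cpow, mul_one] at hd
  rw [hasDerivAt_iff_tendsto_slope] at hd
  have hcomp : Tendsto (fun n : ℕ => ((n : ℂ))⁻¹) atTop (𝓝[≠] (0 : ℂ)) := by
    refine tendsto_nhdsWithin_of_tendsto_nhds_of_eventually_within _ aux_inv_tendsto ?_
    filter_upwards [eventually_ge_atTop 1] with n hn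
    have : (n : ℂ) ≠ 0 := Nat.cast_ne_zero.mpr (by omega)
    simp [this]
  have h := hd.comp hcomp
  refine h.congr' ?_
  filter_upwards [eventually_ge_atTop 1] with n hn
  have hn0 : (n : ℂ) ≠ 0 := Nat.cast_ne_zero.mpr (by omega)
  simp only [Function.comp_def, slope_def_field, sub_zero]
  rw [show ((1 : ℂ) + 0) ^ w = 1 by simp]
  field_simp

private lemma aux_one (w : ℂ) :
    Tendsto (fun n : ℕ => ((1 : ℂ) + (n : ℂ)⁻¹) ^ w) atTop (𝓝 1) := by
  have h := (aux_D w).mul aux_inv_tendsto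
  rw [mul_zero] at h
  have h2 : Tendsto (fun n : ℕ => ((1 : ℂ) + (n : ℂ)⁻¹) ^ w - 1) atTop (𝓝 0) := by
    refine h.congr' ?_
    filter_upwards [eventually_ge_atTop 1] with n hn
    have hn0 : (n : ℂ) ≠ 0 := Nat.cast_ne_zero.mpr (by omega)
    field_simp
  have h3 := h2.add (tendsto_const_nhds (x := (1 : ℂ)))
  simpa using h3

private lemma aux_split (n : ℕ) (hn : 1 ≤ n) (s : ℂ) :
    ((n : ℂ) + 1) ^ s = (n : ℂ) ^ s * ((1 : ℂ) + (n : ℂ)⁻¹) ^ s := by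
  have hnR : (0 : ℝ) < (n : ℝ) := by exact_mod_cast hn
  have hn0 : ((n : ℝ)) ≠ 0 := ne_of_gt hnR
  have h1 : ((n : ℂ) + 1) = (((n : ℝ)) : ℂ) * (((1 + (n : ℝ)⁻¹) : ℝ) : ℂ) := by
    have hc : (n : ℂ) ≠ 0 := Nat.cast_ne_zero.mpr (by omega)
    push_cast
    field_simp
  rw [h1, mul_cpow_ofReal_nonneg (le_of_lt hnR) (by positivity)]
  push_cast
  norm_num

/-- For solutions `u = φ(z;ν)` and `v = φ(-z;ν)` of the three-term
recurrence (which only involves `z²`) with the asymptotics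
`φ_n(±z;ν) = n^{∓z-1/2}/Γ(1±2z) (1+O(1/n))`, the Wronskian
`-(n+ν)(n+ν+1)(u_{n+1} v_n - v_{n+1} u_n)` is independent of `n` and equals
`sin(2πz)/π`. -/
theorem wronskian_of_phi (ν : ℝ) (hν : ∀ m : ℕ, ν ≠ -(m : ℝ)) (z : ℂ)
    (u v : ℕ → ℂ)
    (hu : ∀ n : ℕ,
      -(((n : ℂ) + ν) * ((n : ℂ) + 1 + ν)) * u n
        + (2 * ((n : ℂ) + 1 + ν) ^ 2 - 1 / 4 + z ^ 2) * u (n + 1)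
        - ((n : ℂ) + 1 + ν) * ((n : ℂ) + 2 + ν) * u (n + 2) = 0)
    (hv : ∀ n : ℕ,
      -(((n : ℂ) + ν) * ((n : ℂ) + 1 + ν)) * v n
        + (2 * ((n : ℂ) + 1 + ν) ^ 2 - 1 / 4 + z ^ 2) * v (n + 1)
        - ((n : ℂ) + 1 + ν) * ((n : ℂ) + 2 + ν) * v (n + 2) = 0)
    (hua : (fun n : ℕ => u n * Complex.Gamma (1 + 2 * z) * (n : ℂ) ^ (z + 1 / 2) - 1)
      =O[atTop] (fun n : ℕ => (1 : ℝ) / n))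
    (hva : (fun n : ℕ => v n * Complex.Gamma (1 - 2 * z) * (n : ℂ) ^ (-z + 1 / 2) - 1)
      =O[atTop] (fun n : ℕ => (1 : ℝ) / n)) :
    ∀ n : ℕ,
      -(((n : ℂ) + ν) * ((n : ℂ) + ν + 1)) * (u (n + 1) * v n - v (n + 1) * u n)
        = Complex.sin (2 * Real.pi * z) / Real.pi := by
  have hone : Tendsto (fun n : ℕ => (1 : ℝ) / n) atTop (𝓝 0) :=
    tendsto_one_div_atTop_nhds_zero_nat
  -- Gamma values are nonzero
  have hΓp : Complex.Gamma (1 + 2 * z) ≠ 0 := by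
    intro hΓ
    have h1 : (fun _ : ℕ => (-1 : ℂ)) =O[atTop] (fun n : ℕ => (1 : ℝ) / n) := by
      simpa [hΓ] using hua
    have h3 := tendsto_nhds_unique (h1.trans_tendsto hone) tendsto_const_nhds
    norm_num at h3
  have hΓm : Complex.Gamma (1 - 2 * z) ≠ 0 := by
    intro hΓ
    have h1 : (fun _ : ℕ => (-1 : ℂ)) =O[atTop] (fun n : ℕ => (1 : ℝ) / n) := by
      simpa [hΓ] using hva
    have h3 := tendsto_nhds_unique (h1.trans_tendsto hone) tendsto_const_nhds
    norm_num at h3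
  obtain ⟨Γp, hΓpdef⟩ : ∃ w : ℂ, w = Complex.Gamma (1 + 2 * z) := ⟨_, rfl⟩
  obtain ⟨Γm, hΓmdef⟩ : ∃ w : ℂ, w = Complex.Gamma (1 - 2 * z) := ⟨_, rfl⟩
  rw [← hΓpdef] at hua hΓp
  rw [← hΓmdef] at hva hΓm
  obtain ⟨G, hGdef⟩ : ∃ G : ℕ → ℂ,
      G = fun n : ℕ => u n * Γp * (n : ℂ) ^ (z + 1 / 2) - 1 := ⟨_, rfl⟩
  obtain ⟨H, hHdef⟩ : ∃ H : ℕ → ℂ,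
      H = fun n : ℕ => v n * Γm * (n : ℂ) ^ (-z + 1 / 2) - 1 := ⟨_, rfl⟩
  rw [← hGdef] at hua
  rw [← hHdef] at hva
  have hGn : ∀ n : ℕ, G n = u n * Γp * (n : ℂ) ^ (z + 1 / 2) - 1 :=
    fun n => congrFun hGdef n
  have hHn : ∀ n : ℕ, H n = v n * Γm * (n : ℂ) ^ (-z + 1 / 2) - 1 :=
    fun n => congrFun hHdef n
  -- limits of G and H
  have hG0 : Tendsto G atTop (𝓝 0) := hua.trans_tendsto hone
  have hH0 : Tendsto H atTop (𝓝 0) := hva.trans_tendsto hone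
  have hG1 : Tendsto (fun n => G (n + 1)) atTop (𝓝 0) :=
    hG0.comp (tendsto_add_atTop_nat 1)
  have hH1 : Tendsto (fun n => H (n + 1)) atTop (𝓝 0) :=
    hH0.comp (tendsto_add_atTop_nat 1)
  have hG0' : Tendsto (fun n => G n + 1) atTop (𝓝 1) := by
    have := hG0.add (tendsto_const_nhds (x := (1 : ℂ)))
    simpa using this
  have hH1' : Tendsto (fun n => H (n + 1) + 1) atTop (𝓝 1) := by
    have := hH1.add (tendsto_const_nhds (x := (1 : ℂ)))
    simpa using this
  -- nonvanishing facts
  have hBne1 : ∀ n : ℕ, ((n : ℂ) + ν) ≠ 0 := by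
    intro n hc
    have h1 : (((n : ℝ) + ν : ℝ) : ℂ) = 0 := by push_cast; exact hc
    exact hν n (by have := Complex.ofReal_eq_zero.mp h1; linarith)
  have hBne2 : ∀ n : ℕ, ((n : ℂ) + ν + 1) ≠ 0 := by
    intro n hc
    have h1 : (((n : ℝ) + ν + 1 : ℝ) : ℂ) = 0 := by push_cast; exact hc
    have h2 := Complex.ofReal_eq_zero.mp h1
    exact hν (n + 1) (by push_cast; linarith)
  have hBne : ∀ n : ℕ, ((n : ℂ) + ν) * ((n : ℂ) + ν + 1) ≠ 0 :=
    fun n => mul_ne_zero (hBne1 n) (hBne2 n)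
  -- the Wronskian is constant
  obtain ⟨W, hWdef⟩ : ∃ W : ℂ,
      W = -(((ν : ℂ)) * ((ν : ℂ) + 1)) * (u 1 * v 0 - v 1 * u 0) := ⟨_, rfl⟩
  have hW : ∀ n : ℕ,
      -(((n : ℂ) + ν) * ((n : ℂ) + ν + 1)) * (u (n + 1) * v n - v (n + 1) * u n) = W := by
    intro n
    induction n with
    | zero => rw [hWdef]; norm_num
    | succ n ih =>
      rw [← ih]
      push_cast
      linear_combination (v (n + 1)) * hu n - (u (n + 1)) * hv n
  obtain ⟨x, hxdef⟩ : ∃ x : ℕ → ℂ,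
      x = fun n : ℕ => (G (n + 1) + 1) * (H n + 1) - (H (n + 1) + 1) * (G n + 1) := ⟨_, rfl⟩
  have hxn : ∀ n : ℕ,
      x n = (G (n + 1) + 1) * (H n + 1) - (H (n + 1) + 1) * (G n + 1) :=
    fun n => congrFun hxdef n
  -- the key identity
  have key1 : ∀ n : ℕ, 1 ≤ n → W * (Γp * Γm) =
      -(((n : ℂ) + ν) * ((n : ℂ) + ν + 1)) *
        ((G (n + 1) + 1) * (H n + 1) *
            (((n : ℂ) + 1) ^ (-(z + 1 / 2)) * (n : ℂ) ^ (-(-z + 1 / 2)))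
          - (H (n + 1) + 1) * (G n + 1) *
            (((n : ℂ) + 1) ^ (-(-z + 1 / 2)) * (n : ℂ) ^ (-(z + 1 / 2)))) := by
    intro n hn
    have hn0 : (n : ℂ) ≠ 0 := Nat.cast_ne_zero.mpr (by omega)
    have hn1 : ((n : ℂ) + 1) ≠ 0 := by
      have h1 : (((n + 1 : ℕ)) : ℂ) ≠ 0 := Nat.cast_ne_zero.mpr (by omega)
      intro hc; apply h1; push_cast; exact hc
    have hA : ((n : ℂ) + 1) ^ (z + 1 / 2) ≠ 0 :=
      fun hc => hn1 ((Complex.cpow_eq_zero_iff _ _).mp hc).1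
    have hB : (n : ℂ) ^ (z + 1 / 2) ≠ 0 :=
      fun hc => hn0 ((Complex.cpow_eq_zero_iff _ _).mp hc).1
    have hC : ((n : ℂ) + 1) ^ (-z + 1 / 2) ≠ 0 :=
      fun hc => hn1 ((Complex.cpow_eq_zero_iff _ _).mp hc).1
    have hD : (n : ℂ) ^ (-z + 1 / 2) ≠ 0 :=
      fun hc => hn0 ((Complex.cpow_eq_zero_iff _ _).mp hc).1
    have hiA := mul_inv_cancel₀ hA
    have hiB := mul_inv_cancel₀ hB
    have hiC := mul_inv_cancel₀ hC
    have hiD := mul_inv_cancel₀ hD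
    have p1 : G (n + 1) + 1 = u (n + 1) * Γp * ((n : ℂ) + 1) ^ (z + 1 / 2) := by
      rw [hGn (n + 1)]; push_cast; ring
    have p2 : G n + 1 = u n * Γp * (n : ℂ) ^ (z + 1 / 2) := by
      rw [hGn n]; ring
    have p3 : H (n + 1) + 1 = v (n + 1) * Γm * ((n : ℂ) + 1) ^ (-z + 1 / 2) := by
      rw [hHn (n + 1)]; push_cast; ring
    have p4 : H n + 1 = v n * Γm * (n : ℂ) ^ (-z + 1 / 2) := by
      rw [hHn n]; ring
    rw [← hW n, p1, p2, p3, p4, Complex.cpow_neg (((n : ℂ) + 1)) (z + 1 / 2),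
      Complex.cpow_neg (((n : ℂ))) (z + 1 / 2),
      Complex.cpow_neg (((n : ℂ) + 1)) (-z + 1 / 2),
      Complex.cpow_neg (((n : ℂ))) (-z + 1 / 2)]
    linear_combination
      ((((n : ℂ) + ν) * ((n : ℂ) + ν + 1)) * (Γp * Γm) * (u (n + 1) * v n)) * hiA
        + ((((n : ℂ) + ν) * ((n : ℂ) + ν + 1)) * (Γp * Γm) * (u (n + 1) * v n) *
            (((n : ℂ) + 1) ^ (z + 1 / 2) * (((n : ℂ) + 1) ^ (z + 1 / 2))⁻¹)) * hiD
        - ((((n : ℂ) + ν) * ((n : ℂ) + ν + 1)) * (Γp * Γm) * (v (n + 1) * u n)) * hiC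
        - ((((n : ℂ) + ν) * ((n : ℂ) + ν + 1)) * (Γp * Γm) * (v (n + 1) * u n) *
            (((n : ℂ) + 1) ^ (-z + 1 / 2) * (((n : ℂ) + 1) ^ (-z + 1 / 2))⁻¹)) * hiB
  have key2 : ∀ n : ℕ, 1 ≤ n →
      (((n : ℂ) + ν) * ((n : ℂ) + ν + 1)) *
          (((n : ℂ) + 1) ^ (-(z + 1 / 2)) * (n : ℂ) ^ (-(-z + 1 / 2))) * x n =
        -(W * (Γp * Γm)) - (H (n + 1) + 1) * (G n + 1) *
          ((((n : ℂ) + ν) * ((n : ℂ) + ν + 1)) *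
            ((((n : ℂ) + 1) ^ (-(z + 1 / 2)) * (n : ℂ) ^ (-(-z + 1 / 2)))
              - (((n : ℂ) + 1) ^ (-(-z + 1 / 2)) * (n : ℂ) ^ (-(z + 1 / 2))))) := by
    intro n hn
    rw [hxn n]
    linear_combination key1 n hn
  -- quantitative limits
  have hBlim : Tendsto (fun n : ℕ =>
      (((n : ℂ) + ν) * ((n : ℂ) + ν + 1)) * (n : ℂ)⁻¹ * (n : ℂ)⁻¹) atTop (𝓝 1) := by
    have t1 : Tendsto (fun n : ℕ =>
        ((1 : ℂ) + (ν : ℂ) * (n : ℂ)⁻¹) * (1 + ((ν : ℂ) + 1) * (n : ℂ)⁻¹)) atTop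
        (𝓝 (((1 : ℂ) + (ν : ℂ) * 0) * (1 + ((ν : ℂ) + 1) * 0))) :=
      ((tendsto_const_nhds.add (tendsto_const_nhds.mul aux_inv_tendsto)).mul
        (tendsto_const_nhds.add (tendsto_const_nhds.mul aux_inv_tendsto)))
    norm_num at t1
    refine Tendsto.congr' ?_ t1
    filter_upwards [eventually_ge_atTop 1] with n hn
    have hn0 : (n : ℂ) ≠ 0 := Nat.cast_ne_zero.mpr (by omega)
    have hninv := mul_inv_cancel₀ hn0
    linear_combination (-(1 + (n : ℂ) * (n : ℂ)⁻¹) - (2 * (ν : ℂ) + 1) * (n : ℂ)⁻¹) * hninv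
  have hPQlim : Tendsto (fun n : ℕ =>
      (((n : ℂ) + ν) * ((n : ℂ) + ν + 1)) *
        ((((n : ℂ) + 1) ^ (-(z + 1 / 2)) * (n : ℂ) ^ (-(-z + 1 / 2)))
          - (((n : ℂ) + 1) ^ (-(-z + 1 / 2)) * (n : ℂ) ^ (-(z + 1 / 2))))) atTop
      (𝓝 (-(2 * z))) := by
    have t2 := hBlim.mul ((aux_D (-(z + 1 / 2))).sub (aux_D (-(-z + 1 / 2))))
    rw [show (1 : ℂ) * ((-(z + 1 / 2)) - (-(-z + 1 / 2))) = -(2 * z) by ring] at t2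
    refine Tendsto.congr' ?_ t2
    filter_upwards [eventually_ge_atTop 1] with n hn
    have hn0 : (n : ℂ) ≠ 0 := Nat.cast_ne_zero.mpr (by omega)
    have hninv := mul_inv_cancel₀ hn0
    have hab : (n : ℂ) ^ (-(z + 1 / 2)) * (n : ℂ) ^ (-(-z + 1 / 2)) = (n : ℂ)⁻¹ := by
      rw [← Complex.cpow_add _ _ hn0,
        show (-(z + 1 / 2) + -(-z + 1 / 2)) = (-1 : ℂ) by ring, Complex.cpow_neg_one]
    rw [aux_split n hn (-(z + 1 / 2)), aux_split n hn (-(-z + 1 / 2))]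
    linear_combination
      ((((n : ℂ) + ν) * ((n : ℂ) + ν + 1)) * (n : ℂ)⁻¹ *
          (((1 : ℂ) + (n : ℂ)⁻¹) ^ (-(z + 1 / 2)) - ((1 : ℂ) + (n : ℂ)⁻¹) ^ (-(-z + 1 / 2))))
        * hninv
      - ((((n : ℂ) + ν) * ((n : ℂ) + ν + 1)) *
          (((1 : ℂ) + (n : ℂ)⁻¹) ^ (-(z + 1 / 2)) - ((1 : ℂ) + (n : ℂ)⁻¹) ^ (-(-z + 1 / 2))))
        * hab
  have hBP : Tendsto (fun n : ℕ =>
      (((n : ℂ) + ν) * ((n : ℂ) + ν + 1)) *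
        (((n : ℂ) + 1) ^ (-(z + 1 / 2)) * (n : ℂ) ^ (-(-z + 1 / 2))) * (n : ℂ)⁻¹) atTop
      (𝓝 1) := by
    have t3 := hBlim.mul (aux_one (-(z + 1 / 2)))
    rw [mul_one] at t3
    refine Tendsto.congr' ?_ t3
    filter_upwards [eventually_ge_atTop 1] with n hn
    have hn0 : (n : ℂ) ≠ 0 := Nat.cast_ne_zero.mpr (by omega)
    have hab : (n : ℂ) ^ (-(z + 1 / 2)) * (n : ℂ) ^ (-(-z + 1 / 2)) = (n : ℂ)⁻¹ := by
      rw [← Complex.cpow_add _ _ hn0,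
        show (-(z + 1 / 2) + -(-z + 1 / 2)) = (-1 : ℂ) by ring, Complex.cpow_neg_one]
    rw [aux_split n hn (-(z + 1 / 2))]
    linear_combination
      (-((((n : ℂ) + ν) * ((n : ℂ) + ν + 1)) * ((1 : ℂ) + (n : ℂ)⁻¹) ^ (-(z + 1 / 2)) *
          (n : ℂ)⁻¹)) * hab
  obtain ⟨c, hcdef⟩ : ∃ c : ℂ, c = 2 * z - W * (Γp * Γm) := ⟨_, rfl⟩
  have h_y : Tendsto (fun n : ℕ =>
      (((n : ℂ) + ν) * ((n : ℂ) + ν + 1)) *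
        (((n : ℂ) + 1) ^ (-(z + 1 / 2)) * (n : ℂ) ^ (-(-z + 1 / 2))) * x n) atTop (𝓝 c) := by
    have base := (tendsto_const_nhds (x := -(W * (Γp * Γm)))).sub ((hH1'.mul hG0').mul hPQlim)
    rw [show -(W * (Γp * Γm)) - 1 * 1 * (-(2 * z)) = c by rw [hcdef]; ring] at base
    exact Tendsto.congr' ((eventually_ge_atTop 1).mono fun n hn => (key2 n hn).symm) base
  have hxlim : Tendsto (fun n : ℕ => (n : ℂ) * x n) atTop (𝓝 c) := by
    have t4 := h_y.mul (hBP.inv₀ one_ne_zero)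
    rw [inv_one, mul_one] at t4
    refine Tendsto.congr' ?_ t4
    filter_upwards [eventually_ge_atTop 1] with n hn
    have hn0 : (n : ℂ) ≠ 0 := Nat.cast_ne_zero.mpr (by omega)
    have hn1 : ((n : ℂ) + 1) ≠ 0 := by
      have h1 : (((n + 1 : ℕ)) : ℂ) ≠ 0 := Nat.cast_ne_zero.mpr (by omega)
      intro hc; apply h1; push_cast; exact hc
    have hPn : (((n : ℂ) + 1) ^ (-(z + 1 / 2)) * (n : ℂ) ^ (-(-z + 1 / 2))) ≠ 0 :=
      mul_ne_zero (fun hc => hn1 ((Complex.cpow_eq_zero_iff _ _).mp hc).1)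
        (fun hc => hn0 ((Complex.cpow_eq_zero_iff _ _).mp hc).1)
    have hBPn' : (((n : ℂ) + ν) * ((n : ℂ) + ν + 1) *
        (((n : ℂ) + 1) ^ (-(z + 1 / 2)) * (n : ℂ) ^ (-(-z + 1 / 2))) * (n : ℂ)⁻¹) ≠ 0 :=
      mul_ne_zero (mul_ne_zero (hBne n) hPn) (inv_ne_zero hn0)
    rw [← div_eq_mul_inv, div_eq_iff hBPn']
    have hninv := mul_inv_cancel₀ hn0
    linear_combination (-(((n : ℂ) + ν) * ((n : ℂ) + ν + 1) *
        (((n : ℂ) + 1) ^ (-(z + 1 / 2)) * (n : ℂ) ^ (-(-z + 1 / 2))) * x n)) * hninv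
  -- partial sums of x converge
  have hshift : (fun n : ℕ => (1 : ℝ) / (n + 1 : ℕ)) =O[atTop] (fun n : ℕ => (1 : ℝ) / n) := by
    refine IsBigO.of_bound 1 ?_
    filter_upwards [eventually_ge_atTop 1] with n hn
    have hp : (0 : ℝ) < (n : ℝ) := by exact_mod_cast hn
    rw [one_mul, Real.norm_eq_abs, Real.norm_eq_abs, abs_of_pos (by positivity),
      abs_of_pos (by positivity)]
    have : (n : ℝ) ≤ ((n + 1 : ℕ) : ℝ) := by push_cast; linarith
    exact one_div_le_one_div_of_le hp this
  have hGs : (fun n : ℕ => G (n + 1)) =O[atTop] (fun n : ℕ => (1 : ℝ) / n) := by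
    have h1 := hua.comp_tendsto (tendsto_add_atTop_nat 1)
    simp only [Function.comp_def] at h1
    exact h1.trans hshift
  have hHs : (fun n : ℕ => H (n + 1)) =O[atTop] (fun n : ℕ => (1 : ℝ) / n) := by
    have h1 := hva.comp_tendsto (tendsto_add_atTop_nat 1)
    simp only [Function.comp_def] at h1
    exact h1.trans hshift
  have hesum : Summable (fun n : ℕ => G (n + 1) * H n - H (n + 1) * G n) := by
    have he : (fun n : ℕ => G (n + 1) * H n - H (n + 1) * G n)
        =O[atTop] (fun n : ℕ => (1 : ℝ) / n * ((1 : ℝ) / n)) :=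
      (hGs.mul hva).sub (hHs.mul hua)
    have hb : Summable (fun n : ℕ => (1 : ℝ) / n * ((1 : ℝ) / n)) := by
      have h2 : Summable (fun n : ℕ => (1 : ℝ) / (n : ℝ) ^ 2) :=
        Real.summable_one_div_nat_pow.mpr one_lt_two
      exact h2.congr fun n => by ring
    exact summable_of_isBigO_nat hb he
  have hxsum : ∀ N : ℕ, ∑ n ∈ Finset.range N, x n =
      (G N - G 0) - (H N - H 0) +
        ∑ n ∈ Finset.range N, (G (n + 1) * H n - H (n + 1) * G n) := by
    intro N
    induction N with
    | zero => simp
    | succ N ih =>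
      rw [Finset.sum_range_succ, Finset.sum_range_succ, ih, hxn N]
      ring
  obtain ⟨L, hLsum⟩ : ∃ L : ℂ,
      Tendsto (fun N => ∑ n ∈ Finset.range N, x n) atTop (𝓝 L) := by
    refine ⟨(0 - G 0) - (0 - H 0) + ∑' n, (G (n + 1) * H n - H (n + 1) * G n), ?_⟩
    have base := (((hG0.sub (tendsto_const_nhds (x := G 0)))).sub
        (hH0.sub (tendsto_const_nhds (x := H 0)))).add hesum.hasSum.tendsto_sum_nat
    exact base.congr fun N => (hxsum N).symm
  -- the limit c must vanish
  have hc0 : c = 0 := by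
    by_contra hc
    have hr : Tendsto (fun n : ℕ => (n : ℝ) * ((x n / c).re)) atTop (𝓝 1) := by
      have t5 := hxlim.div_const c
      rw [div_self hc] at t5
      have t6 := (Complex.continuous_re.tendsto 1).comp t5
      simp only [Complex.one_re] at t6
      refine t6.congr fun n => ?_
      simp only [Function.comp_def]
      rw [mul_div_assoc, ← Complex.ofReal_natCast, Complex.re_ofReal_mul]
    have hrsum : Tendsto (fun N => ∑ n ∈ Finset.range N, (x n / c).re) atTop
        (𝓝 ((L / c).re)) := by
      have t7 := hLsum.div_const c
      have t8 := (Complex.continuous_re.tendsto _).comp t7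
      refine t8.congr fun N => ?_
      simp only [Function.comp_def]
      rw [Finset.sum_div, Complex.re_sum]
    have hev := hr.eventually (eventually_gt_nhds (show (1 / 2 : ℝ) < 1 by norm_num))
    rw [eventually_atTop] at hev
    obtain ⟨M0, hM0⟩ := hev
    obtain ⟨M, hM1, hMge⟩ : ∃ M : ℕ, 1 ≤ M ∧ M0 ≤ M := ⟨max M0 1, le_max_right _ _, le_max_left _ _⟩
    have hM : ∀ k : ℕ, 1 / 2 < ((M + k : ℕ) : ℝ) * ((x (M + k) / c).re) :=
      fun k => hM0 _ (le_trans hMge (Nat.le_add_right _ _))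
    have hMpos : ∀ k : ℕ, (1 : ℝ) ≤ ((M + k : ℕ) : ℝ) := by
      intro k
      have : 1 ≤ M + k := le_trans hM1 (Nat.le_add_right _ _)
      exact_mod_cast this
    have hnonneg : ∀ k : ℕ, 0 ≤ (x (M + k) / c).re := by
      intro k
      nlinarith [hM k, hMpos k]
    have hTeq : ∀ N : ℕ, ∑ k ∈ Finset.range N, (x (M + k) / c).re =
        (∑ n ∈ Finset.range (M + N), (x n / c).re) -
          ∑ n ∈ Finset.range M, (x n / c).re := by
      intro N
      induction N with
      | zero => simp
      | succ N ih =>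
        rw [Finset.sum_range_succ, ih, Nat.add_succ, Finset.sum_range_succ]
        ring
    have hTtend : Tendsto (fun N => ∑ k ∈ Finset.range N, (x (M + k) / c).re) atTop
        (𝓝 ((L / c).re - ∑ n ∈ Finset.range M, (x n / c).re)) := by
      have t9 := (hrsum.comp (tendsto_add_atTop_nat M)).sub
        (tendsto_const_nhds (x := ∑ n ∈ Finset.range M, (x n / c).re))
      refine t9.congr fun N => ?_
      simp only [Function.comp_def]
      rw [hTeq N, Nat.add_comm M N]
    obtain ⟨Cb, hCb⟩ := hTtend.bddAbove_range
    have hsumT : Summable (fun k : ℕ => (x (M + k) / c).re) :=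
      summable_of_sum_range_le hnonneg (fun N => hCb ⟨N, rfl⟩)
    have hcomp : Summable (fun k : ℕ => 1 / (2 * ((M + k : ℕ) : ℝ))) := by
      refine Summable.of_nonneg_of_le (fun k => by positivity) (fun k => ?_) hsumT
      have h1 := hM k
      have h2 := hMpos k
      rw [div_le_iff₀ (by positivity)]
      nlinarith
    have hcomp2 : Summable (fun n : ℕ => 1 / (2 * (n : ℝ))) := by
      refine (summable_nat_add_iff M).mp (hcomp.congr fun k => ?_)
      rw [Nat.add_comm M k]
    have hfin : Summable (fun n : ℕ => (1 : ℝ) / n) := by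
      have h2 : Summable (fun n : ℕ => (1 / 2 : ℝ) * ((1 : ℝ) / n)) :=
        hcomp2.congr fun n => by ring
      exact (summable_mul_left_iff (show (1 / 2 : ℝ) ≠ 0 by norm_num)).mp h2
    exact Real.not_summable_one_div_natCast hfin
  have hkey : W * (Γp * Γm) = 2 * z := by
    have h0 : 2 * z - W * (Γp * Γm) = 0 := by rw [← hcdef]; exact hc0
    linear_combination -h0
  -- conclusion
  intro n
  rw [hW n]
  by_cases hz : z = 0
  · subst hz
    have e1 : Γp = 1 := by
      rw [hΓpdef, show (1 + 2 * (0 : ℂ)) = 1 by ring, Complex.Gamma_one]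
    have e2 : Γm = 1 := by
      rw [hΓmdef, show (1 - 2 * (0 : ℂ)) = 1 by ring, Complex.Gamma_one]
    rw [e1, e2] at hkey
    simp only [mul_one, mul_zero] at hkey
    rw [hkey]
    simp
  · have h2z : (2 : ℂ) * z ≠ 0 := mul_ne_zero two_ne_zero hz
    have hrec : Γp = 2 * z * Complex.Gamma (2 * z) := by
      rw [hΓpdef, add_comm, Complex.Gamma_add_one _ h2z]
    have hGz : Complex.Gamma (2 * z) ≠ 0 := by
      intro hg
      apply hΓp
      rw [hrec, hg, mul_zero]
    have hrefl := Complex.Gamma_mul_Gamma_one_sub (2 * z)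
    have hsin : Complex.sin ((Real.pi : ℂ) * (2 * z)) ≠ 0 := by
      intro hs
      rw [hs, div_zero] at hrefl
      rw [← hΓmdef] at hrefl
      exact (mul_ne_zero hGz hΓm) hrefl
    have hπ : ((Real.pi : ℝ) : ℂ) ≠ 0 := Complex.ofReal_ne_zero.mpr Real.pi_ne_zero
    have hrefl' : Complex.Gamma (2 * z) * Γm * Complex.sin ((Real.pi : ℂ) * (2 * z))
        = (Real.pi : ℂ) := by
      rw [hΓmdef, hrefl, div_mul_cancel₀ _ hsin]
    have h1 : W * (Complex.Gamma (2 * z) * Γm) = 1 := by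
      rw [hrec] at hkey
      refine mul_left_cancel₀ h2z ?_
      linear_combination hkey
    rw [show (2 * (Real.pi : ℂ) * z) = (Real.pi : ℂ) * (2 * z) by ring,
      eq_div_iff hπ]
    calc W * (Real.pi : ℂ)
        = W * (Complex.Gamma (2 * z) * Γm * Complex.sin ((Real.pi : ℂ) * (2 * z))) := by
          rw [hrefl']
      _ = (W * (Complex.Gamma (2 * z) * Γm)) * Complex.sin ((Real.pi : ℂ) * (2 * z)) := by
          ring
      _ = Complex.sin ((Real.pi : ℂ) * (2 * z)) := by rw [h1, one_mul]
end

section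
/- For every $\nu \in (0, 1/2]$, the function $x \mapsto \Gamma(\nu)\Gamma(\nu+1)\sum_{k=0}^\infty \frac{(\nu-1)_k (\nu+1)_k}{k!} \prod_{j=0}^{k-1} \frac{x+j+1/2}{(x+\nu+j+1/2)^2}$ is strictly increasing on $[0, 1/2]$. -/
/-- Real Pochhammer symbol `(a)_k`. -/
noncomputable def pochR (a : ℝ) (k : ℕ) : ℝ := ∏ j ∈ Finset.range k, (a + j)

noncomputable def Fk (ν x : ℝ) (k : ℕ) : ℝ :=
  pochR (ν - 1) k * pochR (ν + 1) k / (k.factorial : ℝ) *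
    ∏ j ∈ Finset.range k, (x + j + 1 / 2) / (x + ν + j + 1 / 2) ^ 2

lemma pochR_pos {a : ℝ} (ha : 0 < a) (k : ℕ) : 0 < pochR a k :=
  Finset.prod_pos fun j _ => by positivity

lemma pochR_neg {ν : ℝ} (hν0 : 0 < ν) (hν1 : ν ≤ 1/2) {k : ℕ} (hk : 1 ≤ k) :
    pochR (ν - 1) k < 0 := by
  obtain ⟨n, rfl⟩ : ∃ n, k = n + 1 := ⟨k - 1, by omega⟩
  rw [pochR, Finset.prod_range_succ']
  have h1 : 0 < ∏ i ∈ Finset.range n, (ν - 1 + ((i:ℕ) + 1 : ℕ)) := by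
    apply Finset.prod_pos
    intro i _
    push_cast
    linarith [Nat.cast_nonneg (α := ℝ) i]
  have h2 : ν - 1 + ((0:ℕ):ℝ) < 0 := by norm_num; linarith
  nlinarith

lemma g_lt {ν x y : ℝ} (hν0 : 0 < ν) (hν1 : ν ≤ 1/2) (hx : 0 ≤ x) (hxy : x < y) (j : ℕ) :
    (y + j + 1 / 2) / (y + ν + j + 1 / 2) ^ 2 < (x + j + 1 / 2) / (x + ν + j + 1 / 2) ^ 2 := by
  have hj : (0:ℝ) ≤ j := Nat.cast_nonneg j
  have hy : 0 < y := lt_of_le_of_lt hx hxy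
  rw [div_lt_div_iff₀ (by positivity) (by positivity)]
  nlinarith [mul_pos (sub_pos.mpr hxy)
    (show (0:ℝ) < (x + j + 1/2) * (y + j + 1/2) - ν^2 by nlinarith)]

lemma g_le {ν x y : ℝ} (hν0 : 0 < ν) (hν1 : ν ≤ 1/2) (hx : 0 ≤ x) (hxy : x ≤ y) (j : ℕ) :
    (y + j + 1 / 2) / (y + ν + j + 1 / 2) ^ 2 ≤ (x + j + 1 / 2) / (x + ν + j + 1 / 2) ^ 2 := by
  rcases eq_or_lt_of_le hxy with rfl | h
  · exact le_refl _
  · exact (g_lt hν0 hν1 hx h j).le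

lemma g_pos {ν x : ℝ} (hν0 : 0 < ν) (hx : 0 ≤ x) (j : ℕ) :
    0 < (x + j + 1 / 2) / (x + ν + j + 1 / 2) ^ 2 := by
  have hj : (0:ℝ) ≤ j := Nat.cast_nonneg j
  positivity

lemma Fk_zero (ν x : ℝ) : Fk ν x 0 = 1 := by
  simp [Fk, pochR]

lemma c_nonpos {ν : ℝ} (hν0 : 0 < ν) (hν1 : ν ≤ 1/2) {k : ℕ} (hk : 1 ≤ k) :
    pochR (ν - 1) k * pochR (ν + 1) k / (k.factorial : ℝ) ≤ 0 := by
  apply div_nonpos_of_nonpos_of_nonneg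
  · exact (mul_nonpos_iff.mpr (Or.inr ⟨(pochR_neg hν0 hν1 hk).le, (pochR_pos (by linarith) k).le⟩))
  · positivity

lemma Fk_le {ν x y : ℝ} (hν0 : 0 < ν) (hν1 : ν ≤ 1/2) (hx : 0 ≤ x) (hxy : x ≤ y) (k : ℕ) :
    Fk ν x k ≤ Fk ν y k := by
  cases k with
  | zero => rw [Fk_zero, Fk_zero]
  | succ n =>
    have hc := c_nonpos hν0 hν1 (Nat.succ_le_succ (Nat.zero_le n)) (k := n+1)
    have hy : 0 ≤ y := le_trans hx hxy
    have hP : ∏ j ∈ Finset.range (n+1), (y + j + 1 / 2) / (y + ν + j + 1 / 2) ^ 2 ≤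
        ∏ j ∈ Finset.range (n+1), (x + j + 1 / 2) / (x + ν + j + 1 / 2) ^ 2 :=
      Finset.prod_le_prod (fun j _ => (g_pos hν0 hy j).le) (fun j _ => g_le hν0 hν1 hx hxy j)
    exact mul_le_mul_of_nonpos_left hP hc

lemma Fk_lt_one {ν x y : ℝ} (hν0 : 0 < ν) (hν1 : ν ≤ 1/2) (hx : 0 ≤ x) (hxy : x < y) :
    Fk ν x 1 < Fk ν y 1 := by
  have hc : pochR (ν - 1) 1 * pochR (ν + 1) 1 / ((1:ℕ).factorial : ℝ) < 0 := by
    simp [pochR]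
    nlinarith
  have hg := g_lt hν0 hν1 hx hxy 0
  have hPx : Fk ν x 1 = pochR (ν - 1) 1 * pochR (ν + 1) 1 / ((1:ℕ).factorial : ℝ) *
      ((x + (0:ℕ) + 1 / 2) / (x + ν + (0:ℕ) + 1 / 2) ^ 2) := by
    simp [Fk]
  have hPy : Fk ν y 1 = pochR (ν - 1) 1 * pochR (ν + 1) 1 / ((1:ℕ).factorial : ℝ) *
      ((y + (0:ℕ) + 1 / 2) / (y + ν + (0:ℕ) + 1 / 2) ^ 2) := by
    simp [Fk]
  rw [hPx, hPy]
  exact mul_lt_mul_of_neg_left hg hc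

lemma Fk_nonpos {ν x : ℝ} (hν0 : 0 < ν) (hν1 : ν ≤ 1/2) (hx : 0 ≤ x) {k : ℕ} (hk : 1 ≤ k) :
    Fk ν x k ≤ 0 := by
  have hc := c_nonpos hν0 hν1 hk
  have hP : 0 ≤ ∏ j ∈ Finset.range k, (x + j + 1 / 2) / (x + ν + j + 1 / 2) ^ 2 :=
    Finset.prod_nonneg fun j _ => (g_pos hν0 hx j).le
  exact mul_nonpos_iff.mpr (Or.inr ⟨hc, hP⟩)

lemma Fk_succ (ν x : ℝ) (k : ℕ) :
    Fk ν x (k+1) = Fk ν x k *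
      ((ν - 1 + k) * (ν + 1 + k) / (k + 1) * ((x + k + 1 / 2) / (x + ν + k + 1 / 2) ^ 2)) := by
  have h1 : (k.factorial : ℝ) ≠ 0 := Nat.cast_ne_zero.mpr k.factorial_ne_zero
  have h2 : ((k:ℝ) + 1) ≠ 0 := by positivity
  simp only [Fk, pochR, Finset.prod_range_succ, Nat.factorial_succ]
  push_cast
  field_simp
  ring

lemma rho_le_rpow {ν K : ℝ} (hν0 : 0 < ν) (hν1 : ν ≤ 1/2) (hK : 1 ≤ K) :
    (ν - 1 + K) * (ν + 1 + K) / (K + 1) * ((K + 1/2) / (ν + K + 1/2)^2)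
      ≤ (K / (K + 1)) ^ ((5:ℝ)/4) := by
  have hden : (0:ℝ) < ν + K + 1/2 := by linarith
  have hK0 : (0:ℝ) < K := by linarith
  have hnum : (0:ℝ) ≤ ν - 1 + K := by linarith
  have hb : (0:ℝ) ≤ K / (K + 1) := by positivity
  have hρ0 : 0 ≤ (ν - 1 + K) * (ν + 1 + K) / (K + 1) * ((K + 1/2) / (ν + K + 1/2)^2) := by
    positivity
  have hm : ν + K + 1/2 ≤ K + 1 := by linarith
  have h1 : (ν + K + 1/2) * (ν + K + 1/2) ≤ (ν + K + 1/2) * (K + 1) :=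
    mul_le_mul_of_nonneg_left hm hden.le
  have hcore : (ν - 1 + K) * (ν + 1 + K) * (K + 1) ≤ K * (ν + K + 1/2)^2 := by nlinarith
  have hβ : (ν - 1 + K) * (ν + 1 + K) / (K + 1) * ((K + 1/2) / (ν + K + 1/2)^2)
      ≤ K * (K + 1/2) / (K + 1)^2 := by
    rw [div_mul_div_comm, div_le_div_iff₀ (by positivity) (by positivity)]
    nlinarith [mul_le_mul_of_nonneg_right hcore (show (0:ℝ) ≤ (K + 1/2) * (K + 1) by positivity)]
  have hkey : (K + 1/2)^4 ≤ K * (K + 1)^3 := by nlinarith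
  have hβ4 : (K * (K + 1/2) / (K + 1)^2)^4 ≤ (K / (K + 1))^(5:ℕ) := by
    rw [div_pow, div_pow, div_le_div_iff₀ (by positivity) (by positivity)]
    nlinarith [mul_le_mul_of_nonneg_right hkey (show (0:ℝ) ≤ K^4 * (K+1)^5 by positivity)]
  have ht4 : ((K / (K + 1)) ^ ((5:ℝ)/4))^(4:ℕ) = (K / (K + 1))^(5:ℕ) := by
    rw [← Real.rpow_natCast ((K/(K+1))^((5:ℝ)/4)) 4, ← Real.rpow_natCast (K/(K+1)) 5,
      ← Real.rpow_mul hb]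
    norm_num
  refine le_of_pow_le_pow_left₀ (n := 4) (by norm_num) (Real.rpow_nonneg hb _) ?_
  rw [ht4]
  exact le_trans (pow_le_pow_left₀ hρ0 hβ 4) hβ4

lemma decay {ν : ℝ} (hν0 : 0 < ν) (hν1 : ν ≤ 1/2) :
    ∀ k : ℕ, 1 ≤ k → |Fk ν 0 k| ≤ |Fk ν 0 1| / (k:ℝ)^((5:ℝ)/4) := by
  intro k hk
  induction k, hk using Nat.le_induction with
  | base => simp
  | succ k hk IH =>
    have hK : (1:ℝ) ≤ (k:ℝ) := by exact_mod_cast hk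
    have hK0 : (0:ℝ) < k := by linarith
    have hnum : (0:ℝ) ≤ ν - 1 + k := by linarith
    have hfac0 : (0:ℝ) ≤ (ν - 1 + (k:ℝ)) * (ν + 1 + k) / ((k:ℝ) + 1) *
        (((k:ℝ) + 1/2) / (ν + (k:ℝ) + 1/2)^2) := by
      apply mul_nonneg
      · apply div_nonneg (mul_nonneg hnum (by linarith)) (by linarith)
      · apply div_nonneg (by linarith) (by positivity)
    have hρ := rho_le_rpow hν0 hν1 hK
    have hC : (0:ℝ) ≤ |Fk ν 0 1| := abs_nonneg _
    have hkp : (0:ℝ) < (k:ℝ)^((5:ℝ)/4) := Real.rpow_pos_of_pos hK0 _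
    have step : |Fk ν 0 (k+1)| = |Fk ν 0 k| *
        ((ν - 1 + (k:ℝ)) * (ν + 1 + k) / ((k:ℝ) + 1) *
          (((k:ℝ) + 1/2) / (ν + (k:ℝ) + 1/2)^2)) := by
      rw [Fk_succ, abs_mul]
      simp only [zero_add]
      rw [abs_of_nonneg hfac0]
    rw [step]
    push_cast
    calc |Fk ν 0 k| * ((ν - 1 + (k:ℝ)) * (ν + 1 + k) / ((k:ℝ) + 1) *
          (((k:ℝ) + 1/2) / (ν + (k:ℝ) + 1/2)^2))
        ≤ (|Fk ν 0 1| / (k:ℝ)^((5:ℝ)/4)) * ((ν - 1 + (k:ℝ)) * (ν + 1 + k) / ((k:ℝ) + 1) *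
          (((k:ℝ) + 1/2) / (ν + (k:ℝ) + 1/2)^2)) := mul_le_mul_of_nonneg_right IH hfac0
      _ ≤ (|Fk ν 0 1| / (k:ℝ)^((5:ℝ)/4)) * (((k:ℝ)/((k:ℝ)+1))^((5:ℝ)/4)) :=
          mul_le_mul_of_nonneg_left hρ (div_nonneg hC hkp.le)
      _ = |Fk ν 0 1| / ((k:ℝ)+1)^((5:ℝ)/4) := by
          rw [Real.div_rpow hK0.le (by linarith : (0:ℝ) ≤ (k:ℝ)+1)]
          field_simp

lemma Fk_summable_zero {ν : ℝ} (hν0 : 0 < ν) (hν1 : ν ≤ 1/2) : Summable (Fk ν 0) := by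
  rw [← summable_nat_add_iff 1]
  have hs : Summable (fun n : ℕ => |Fk ν 0 1| * (1 / ((n+1:ℕ):ℝ)^((5:ℝ)/4))) := by
    apply Summable.mul_left
    exact (summable_nat_add_iff 1).mpr
      ((Real.summable_one_div_nat_rpow (p := (5:ℝ)/4)).mpr (by norm_num))
  apply Summable.of_norm_bounded hs
  intro n
  rw [Real.norm_eq_abs, mul_one_div]
  exact decay hν0 hν1 (n+1) (by omega)

lemma summable_x {ν x : ℝ} (hν0 : 0 < ν) (hν1 : ν ≤ 1/2) (hx : 0 ≤ x) :
    Summable (Fk ν x) := by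
  apply Summable.of_norm_bounded (g := fun k => ‖Fk ν 0 k‖) (Fk_summable_zero hν0 hν1).norm
  intro k
  cases k with
  | zero => simp [Fk_zero]
  | succ n =>
    have h1 : Fk ν x (n+1) ≤ 0 := Fk_nonpos hν0 hν1 hx (by omega)
    have h0 : Fk ν 0 (n+1) ≤ Fk ν x (n+1) := Fk_le hν0 hν1 le_rfl hx (n+1)
    simp only [Real.norm_eq_abs]
    rw [abs_of_nonpos h1, abs_of_nonpos (le_trans h0 h1)]
    linarith

/-- for every `ν ∈ (0, 1/2]`, the function
`x ↦ Γ(ν)Γ(ν+1) ∑_k ((ν-1)_k (ν+1)_k / k!) ∏_{j<k} (x+j+1/2)/(x+ν+j+1/2)²`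
is strictly increasing on `[0, 1/2]`. -/
theorem chi_strictMono_in_x (ν : ℝ) (hν0 : 0 < ν) (hν1 : ν ≤ 1 / 2) :
    StrictMonoOn
      (fun x : ℝ => Real.Gamma ν * Real.Gamma (ν + 1) *
        ∑' k : ℕ, pochR (ν - 1) k * pochR (ν + 1) k / (k.factorial : ℝ) *
          ∏ j ∈ Finset.range k, (x + j + 1 / 2) / (x + ν + j + 1 / 2) ^ 2)
      (Set.Icc (0 : ℝ) (1 / 2)) := by
  intro x hx y hy hxy
  have hΓ : 0 < Real.Gamma ν * Real.Gamma (ν + 1) :=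
    mul_pos (Real.Gamma_pos_of_pos hν0) (Real.Gamma_pos_of_pos (by linarith))
  have hx0 : 0 ≤ x := hx.1
  have hy0 : 0 ≤ y := hy.1
  have htsum : ∑' k, Fk ν x k < ∑' k, Fk ν y k :=
    Summable.tsum_lt_tsum (fun k => Fk_le hν0 hν1 hx0 hxy.le k)
      (Fk_lt_one hν0 hν1 hx0 hxy) (summable_x hν0 hν1 hx0) (summable_x hν0 hν1 hy0)
  exact mul_lt_mul_of_pos_left htsum hΓ
end
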